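/- arXiv:1112.2282 — 8 statements merged into one kernel-verified Lean document; each statement's English description precedes it below -/
import Mathlib

section
/- Let ω > 0, x > 0, and let f be continuous on the closed first quadrant minus the origin with constants M > 0, δ < 1 and 0 ≤ d < ω such that |f(z)| ≤ M·|z|^δ·e^{d·Im z} for all z in the closed first quadrant with |z| sufficiently large. Then the integral over the quarter circle of radius R, namely ∫_0^{π/2} e^{iωR e^{iθ}}·(f(R e^{iθ})/(R e^{iθ}−x))·iR e^{iθ} dθ, tends to 0 as R → ∞. -/
open Filter MeasureTheory Set intervalIntegral Real

/-!
On the arc `z = R e^{iθ}` one has `|e^{iωz}| = e^{-ωR sin θ}`, which beats the growth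
`e^{dR sin θ}` of `f` because `d < ω`, while `|z - x| ≥ R/2` and `|dz| = R dθ`. Jordan's inequality
`sin θ ≥ 2θ/π` bounds `∫₀^{π/2} e^{-(ω-d)R sin θ} dθ` by `π / (2(ω-d)R)`, so the whole integral is
`O(R^{δ-1})`, and `δ < 1`.
-/

theorem integral_exp_neg_mul_le {k : ℝ} (hk : 0 < k) (T : ℝ) :
    ∫ θ in (0 : ℝ)..T, Real.exp (-k * θ) ≤ 1 / k := by
  rw [integral_comp_mul_left (fun u => Real.exp u) (neg_ne_zero.2 hk.ne'), integral_exp,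
    mul_zero, Real.exp_zero, smul_eq_mul, inv_neg, neg_mul, ← mul_neg, neg_sub, ← div_eq_inv_mul]
  gcongr
  linarith [Real.exp_pos (-k * T)]

theorem integral_exp_neg_mul_sin_le {a : ℝ} (ha : 0 < a) :
    ∫ θ in (0 : ℝ)..(π / 2), Real.exp (-(a * Real.sin θ)) ≤ π / (2 * a) := by
  have hk : 0 < 2 * a / π := by positivity
  calc ∫ θ in (0 : ℝ)..(π / 2), Real.exp (-(a * Real.sin θ))
      ≤ ∫ θ in (0 : ℝ)..(π / 2), Real.exp (-(2 * a / π) * θ) := by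
        refine integral_mono_on (by positivity) (Continuous.intervalIntegrable (by fun_prop) _ _)
          (Continuous.intervalIntegrable (by fun_prop) _ _) fun θ hθ => Real.exp_le_exp.2 ?_
        have jordan := Real.mul_le_sin hθ.1 hθ.2
        have : 2 * a / π * θ ≤ a * Real.sin θ := by
          calc 2 * a / π * θ = a * (2 / π * θ) := by ring
            _ ≤ a * Real.sin θ := by gcongr
        linarith
    _ ≤ 1 / (2 * a / π) := integral_exp_neg_mul_le hk _
    _ = π / (2 * a) := by rw [one_div_div]

theorem ofReal_mul_exp_I_mul_im (R θ : ℝ) :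
    ((R : ℂ) * Complex.exp (Complex.I * θ)).im = R * Real.sin θ := by
  rw [mul_comm Complex.I, Complex.im_ofReal_mul, Complex.exp_ofReal_mul_I_im]

theorem ofReal_mul_exp_I_mul_re (R θ : ℝ) :
    ((R : ℂ) * Complex.exp (Complex.I * θ)).re = R * Real.cos θ := by
  rw [mul_comm Complex.I, Complex.re_ofReal_mul, Complex.exp_ofReal_mul_I_re]

theorem norm_ofReal_mul_exp_I_mul (R θ : ℝ) :
    ‖(R : ℂ) * Complex.exp (Complex.I * θ)‖ = |R| := by
  rw [norm_mul, Complex.norm_exp_I_mul_ofReal, Complex.norm_real, Real.norm_eq_abs, mul_one]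

theorem norm_exp_I_mul_ofReal_mul (ω : ℝ) (z : ℂ) :
    ‖Complex.exp (Complex.I * ω * z)‖ = Real.exp (-(ω * z.im)) := by
  rw [Complex.norm_exp]
  simp [Complex.mul_re]

theorem norm_arc_integrand_le {ω x M δ d R θ : ℝ} {w : ℂ} (hR : 2 * |x| ≤ R) (hR0 : 0 < R)
    (hw : ‖w‖ ≤ M * R ^ δ * Real.exp (d * (R * Real.sin θ))) :
    ‖Complex.exp (Complex.I * ω * (R * Complex.exp (Complex.I * θ))) *
        (w / (R * Complex.exp (Complex.I * θ) - x)) * (Complex.I * R * Complex.exp (Complex.I * θ))‖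
      ≤ 2 * M * R ^ δ * Real.exp (-((ω - d) * R * Real.sin θ)) := by
  have hz : ‖(R : ℂ) * Complex.exp (Complex.I * θ)‖ = R := by
    rw [norm_ofReal_mul_exp_I_mul, abs_of_pos hR0]
  have hzx : R / 2 ≤ ‖(R : ℂ) * Complex.exp (Complex.I * θ) - x‖ := by
    have := norm_sub_norm_le ((R : ℂ) * Complex.exp (Complex.I * θ)) x
    rw [hz, Complex.norm_real, Real.norm_eq_abs] at this
    linarith
  rw [norm_mul, norm_mul, norm_div, norm_exp_I_mul_ofReal_mul, ofReal_mul_exp_I_mul_im,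
    mul_assoc Complex.I, norm_mul Complex.I, Complex.norm_I, one_mul, hz]
  calc Real.exp (-(ω * (R * Real.sin θ))) * (‖w‖ / ‖(R : ℂ) * Complex.exp (Complex.I * θ) - x‖) * R
      ≤ Real.exp (-(ω * (R * Real.sin θ))) * (M * R ^ δ * Real.exp (d * (R * Real.sin θ)) / (R / 2))
          * R := by
        gcongr
        exact (norm_nonneg w).trans hw
    _ = 2 * M * R ^ δ * (Real.exp (-(ω * (R * Real.sin θ))) * Real.exp (d * (R * Real.sin θ))) := by
        field_simp
    _ = 2 * M * R ^ δ * Real.exp (-((ω - d) * R * Real.sin θ)) := by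
        rw [← Real.exp_add]; ring_nf

theorem norm_arc_integrand_le_of_growth {ω x M δ d R₀ R θ : ℝ} {f : ℂ → ℂ}
    (hgrowth : ∀ z : ℂ, 0 ≤ z.re → 0 ≤ z.im → R₀ ≤ ‖z‖ →
      ‖f z‖ ≤ M * ‖z‖ ^ δ * Real.exp (d * z.im))
    (hRR₀ : R₀ ≤ R) (hR : 2 * |x| ≤ R) (hR0 : 0 < R) (hθ : θ ∈ Icc 0 (π / 2)) :
    ‖Complex.exp (Complex.I * ω * (R * Complex.exp (Complex.I * θ))) *
        (f (R * Complex.exp (Complex.I * θ)) / (R * Complex.exp (Complex.I * θ) - x)) *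
        (Complex.I * R * Complex.exp (Complex.I * θ))‖
      ≤ 2 * M * R ^ δ * Real.exp (-((ω - d) * R * Real.sin θ)) := by
  have hcos : 0 ≤ Real.cos θ := Real.cos_nonneg_of_mem_Icc ⟨by linarith [hθ.1, pi_pos], hθ.2⟩
  have hsin : 0 ≤ Real.sin θ :=
    Real.sin_nonneg_of_nonneg_of_le_pi hθ.1 (by linarith [hθ.2, pi_pos])
  have hf := hgrowth (R * Complex.exp (Complex.I * θ))
    (by rw [ofReal_mul_exp_I_mul_re]; positivity) (by rw [ofReal_mul_exp_I_mul_im]; positivity)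
    (by rwa [norm_ofReal_mul_exp_I_mul, abs_of_pos hR0])
  rw [norm_ofReal_mul_exp_I_mul, abs_of_pos hR0, ofReal_mul_exp_I_mul_im] at hf
  exact norm_arc_integrand_le hR hR0 hf

theorem quarter_circle_integral_tendsto_zero_general
    (ω x M δ d : ℝ) (f : ℂ → ℂ)
    (hM : 0 < M) (hδ : δ < 1) (hdω : d < ω)
    (hgrowth : ∃ R₀ : ℝ, ∀ z : ℂ, 0 ≤ z.re → 0 ≤ z.im → R₀ ≤ ‖z‖ →
      ‖f z‖ ≤ M * ‖z‖ ^ δ * Real.exp (d * z.im)) :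
    Tendsto (fun R : ℝ => ∫ θ in (0 : ℝ)..(Real.pi / 2),
        Complex.exp (Complex.I * ω * (R * Complex.exp (Complex.I * θ))) *
          (f (R * Complex.exp (Complex.I * θ)) /
            (R * Complex.exp (Complex.I * θ) - x)) *
          (Complex.I * R * Complex.exp (Complex.I * θ)))
      atTop (nhds 0) := by
  obtain ⟨R₀, hR₀⟩ := hgrowth
  have hc : 0 < ω - d := sub_pos.2 hdω
  have hlim : Tendsto (fun R : ℝ => M * π / (ω - d) * R ^ (δ - 1)) atTop (nhds 0) := by
    simpa using
      (tendsto_rpow_neg_atTop (y := 1 - δ) (by linarith)).const_mul (M * π / (ω - d))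
  refine squeeze_zero_norm' ?_ hlim
  filter_upwards [eventually_ge_atTop R₀, eventually_ge_atTop (2 * |x|), eventually_gt_atTop 0]
    with R hRR₀ hRx hR
  calc _ ≤ ∫ θ in (0 : ℝ)..(π / 2), 2 * M * R ^ δ * Real.exp (-((ω - d) * R * Real.sin θ)) :=
        norm_integral_le_of_norm_le (by positivity)
          (ae_of_all _ fun θ hθ =>
            norm_arc_integrand_le_of_growth hR₀ hRR₀ hRx hR (Ioc_subset_Icc_self hθ))
          (Continuous.intervalIntegrable (by fun_prop) _ _)
    _ = 2 * M * R ^ δ * ∫ θ in (0 : ℝ)..(π / 2), Real.exp (-((ω - d) * R * Real.sin θ)) :=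
        integral_const_mul _ _
    _ ≤ 2 * M * R ^ δ * (π / (2 * ((ω - d) * R))) := by
        gcongr
        exact integral_exp_neg_mul_sin_le (by positivity)
    _ = M * π / (ω - d) * R ^ (δ - 1) := by
        rw [Real.rpow_sub hR, Real.rpow_one]
        field_simp

/-- Arc-vanishing estimate: the integral over the quarter circle of radius R tends to 0. -/
theorem quarter_circle_integral_tendsto_zero
    (ω x M δ d : ℝ) (f : ℂ → ℂ)
    (hω : 0 < ω) (hx : 0 < x) (hM : 0 < M) (hδ : δ < 1) (hd0 : 0 ≤ d) (hdω : d < ω)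
    (hcont : ContinuousOn f ({z : ℂ | 0 ≤ z.re ∧ 0 ≤ z.im} \ {0}))
    (hgrowth : ∃ R₀ : ℝ, ∀ z : ℂ, 0 ≤ z.re → 0 ≤ z.im → R₀ ≤ ‖z‖ →
      ‖f z‖ ≤ M * ‖z‖ ^ δ * Real.exp (d * z.im)) :
    Tendsto (fun R : ℝ => ∫ θ in (0 : ℝ)..(Real.pi / 2),
        Complex.exp (Complex.I * ω * (R * Complex.exp (Complex.I * θ))) *
          (f (R * Complex.exp (Complex.I * θ)) /
            (R * Complex.exp (Complex.I * θ) - x)) *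
          (Complex.I * R * Complex.exp (Complex.I * θ)))
      atTop (nhds 0) :=
  quarter_circle_integral_tendsto_zero_general ω x M δ d f hM hδ hdω hgrowth
end

section
/- Let ω > 0, 0 < α < 1, and let f : (0,∞) → ℂ be locally integrable with a_0 ∈ ℂ such that f(t) − a_0·t^{−α} = O(t^{1−α}) as t → 0+ and such that the improper integral ∫_0^∞ e^{iωt}·(f(t) − a_0 t^{−α})/t dt converges. Then the Hadamard finite-part integral lim_{ε→0+} ( lim_{R→∞} ∫_ε^R e^{iωt} f(t)/t dt − a_0/(α·ε^α) ) exists and equals (e^{iπ(2−α)/2}·ω^α/α)·Γ(1−α)·a_0 + ∫_0^∞ e^{iωt}·(f(t) − a_0 t^{−α})/t dt. -/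
/-!
Subtracting the singular part splits `e^{iωt} f(t)/t = g(t) + a₀ e^{iωt} t^{-α-1}` with
`∫_0^R g → G`, so everything reduces to the finite part of `∫_ε^∞ e^{iωt} t^{-α-1} dt`.
Since `∫_ε^∞ t^{-α-1} dt = ε^{-α}/α`, that finite part is
`∫_0^∞ (e^{iωt} - 1) t^{-α-1} dt = F(-iω)`, where `F(z) = ∫_0^∞ (e^{-zt} - 1) t^{-α-1} dt`.
For `Re z > 0`, integration by parts and the Laplace transform
`∫_0^∞ t^{a-1} e^{-zt} dt = z^{-a} Γ(a)` (continued analytically from real `z > 0`) give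
`F(z) = -Γ(1-α) z^α / α`; `F` is continuous up to the imaginary axis by dominated convergence,
and `(-iω)^α = ω^α e^{-iπα/2}`.
-/

open Filter MeasureTheory Set Complex Topology

theorem norm_cexp_sub_one_le_norm_of_re_nonpos {w : ℂ} (hw : w.re ≤ 0) :
    ‖exp w - 1‖ ≤ ‖w‖ := by
  have hconv : Convex ℝ {z : ℂ | z.re ≤ 0} := convex_halfSpace_re_le 0
  have := hconv.norm_image_sub_le_of_norm_deriv_le (f := exp) (C := 1)
    (fun z _ => differentiableAt_exp) (fun z hz => by
      rw [Complex.deriv_exp, norm_exp, Real.exp_le_one_iff]; exact hz)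
    (x := 0) (y := w) (by simp) hw
  simpa using this

theorem norm_cexp_sub_one_le_two_of_re_nonpos {w : ℂ} (hw : w.re ≤ 0) :
    ‖exp w - 1‖ ≤ 2 := by
  calc ‖exp w - 1‖ ≤ ‖exp w‖ + ‖(1 : ℂ)‖ := norm_sub_le _ _
    _ ≤ 1 + 1 := by
      gcongr
      · rw [norm_exp, Real.exp_le_one_iff]; exact hw
      · simp
    _ = 2 := by norm_num

theorem norm_cpow_mul_cexp_neg_mul {a z : ℂ} {t : ℝ} (ht : 0 < t) :
    ‖(t : ℂ) ^ a * exp (-(z * t))‖ = t ^ a.re * Real.exp (-(z.re * t)) := by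
  rw [norm_mul, norm_cpow_eq_rpow_re_of_pos ht, norm_exp]
  simp

theorem continuousOn_ofReal_rpow_Ioi (s : ℝ) :
    ContinuousOn (fun t : ℝ => ((t ^ s : ℝ) : ℂ)) (Ioi 0) :=
  continuous_ofReal.comp_continuousOn (continuousOn_id.rpow_const fun _ ht => Or.inl (ne_of_gt ht))

theorem continuousOn_ofReal_cpow_Ioi (a : ℂ) : ContinuousOn (fun t : ℝ => (t : ℂ) ^ a) (Ioi 0) :=
  fun t ht => (continuousAt_ofReal_cpow_const t a (Or.inr (ne_of_gt ht))).continuousWithinAt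

theorem integrableOn_rpow_mul_exp_neg_mul_Ioi {s c : ℝ} (hs : -1 < s) (hc : 0 < c) :
    IntegrableOn (fun t : ℝ => t ^ s * Real.exp (-(c * t))) (Ioi 0) := by
  simpa using integrableOn_rpow_mul_exp_neg_mul_rpow hs one_pos hc

theorem integrableOn_cpow_mul_cexp_neg_mul_Ioi {a z : ℂ} (ha : -1 < a.re) (hz : 0 < z.re) :
    IntegrableOn (fun t : ℝ => (t : ℂ) ^ a * exp (-(z * t))) (Ioi 0) := by
  refine (integrableOn_rpow_mul_exp_neg_mul_Ioi ha hz).mono' ?_ ?_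
  · exact ((continuousOn_ofReal_cpow_Ioi a).mul (by fun_prop)).aestronglyMeasurable
      measurableSet_Ioi
  · filter_upwards [ae_restrict_mem measurableSet_Ioi] with t ht
    rw [norm_cpow_mul_cexp_neg_mul ht]

theorem differentiableOn_integral_cpow_mul_cexp_neg_mul {a : ℂ} (ha : -1 < a.re) :
    DifferentiableOn ℂ (fun z : ℂ => ∫ t in Ioi (0 : ℝ), (t : ℂ) ^ a * exp (-(z * t)))
      {z | 0 < z.re} := by
  intro z (hz : 0 < z.re)
  refine DifferentiableAt.differentiableWithinAt (hasDerivAt_integral_of_dominated_loc_of_deriv_le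
    (μ := volume.restrict (Ioi 0)) (F := fun w (t : ℝ) => (t : ℂ) ^ a * exp (-(w * t)))
    (F' := fun w (t : ℝ) => (t : ℂ) ^ a * (exp (-(w * t)) * -t))
    (bound := fun t => t ^ (a.re + 1) * Real.exp (-(z.re / 2 * t)))
    (Metric.ball_mem_nhds z (half_pos hz))
    (Eventually.of_forall fun w => ?_) (integrableOn_cpow_mul_cexp_neg_mul_Ioi ha hz) ?_ ?_
    (integrableOn_rpow_mul_exp_neg_mul_Ioi (by linarith) (half_pos hz)) ?_).2.differentiableAt
  · exact ((continuousOn_ofReal_cpow_Ioi a).mul (by fun_prop)).aestronglyMeasurable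
      measurableSet_Ioi
  · exact ((continuousOn_ofReal_cpow_Ioi a).mul (by fun_prop)).aestronglyMeasurable
      measurableSet_Ioi
  · filter_upwards [ae_restrict_mem measurableSet_Ioi] with t (ht : 0 < t) w hw
    have hwre : z.re / 2 ≤ w.re := by
      have := (abs_re_le_norm (w - z)).trans (mem_ball_iff_norm.mp hw).le
      rw [sub_re] at this
      linarith [abs_le.mp this]
    calc ‖(t : ℂ) ^ a * (exp (-(w * t)) * -t)‖
        = t ^ (a.re + 1) * Real.exp (-(w.re * t)) := by
          rw [← mul_assoc, norm_mul, norm_cpow_mul_cexp_neg_mul ht, norm_neg, norm_real,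
            Real.norm_of_nonneg ht.le, Real.rpow_add_one ht.ne']
          ring
      _ ≤ t ^ (a.re + 1) * Real.exp (-(z.re / 2 * t)) := by gcongr
  · filter_upwards [ae_restrict_mem measurableSet_Ioi] with t ht w hw
    exact (((hasDerivAt_mul_const (t : ℂ)).neg).cexp).const_mul _

theorem integral_cpow_mul_cexp_neg_mul_Ioi {a z : ℂ} (ha : 0 < a.re) (hz : 0 < z.re) :
    ∫ t in Ioi (0 : ℝ), (t : ℂ) ^ (a - 1) * exp (-(z * t)) = (1 / z) ^ a * Gamma a := by
  set U : Set ℂ := {z | 0 < z.re}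
  have hU : IsOpen U := isOpen_lt continuous_const continuous_re
  have hlhs : AnalyticOnNhd ℂ
      (fun z : ℂ => ∫ t in Ioi (0 : ℝ), (t : ℂ) ^ (a - 1) * exp (-(z * t))) U :=
    (differentiableOn_integral_cpow_mul_cexp_neg_mul (by simpa using ha)).analyticOnNhd hU
  have hrhs : AnalyticOnNhd ℂ (fun z : ℂ => (1 / z) ^ a * Gamma a) U := by
    refine DifferentiableOn.analyticOnNhd (fun z (hz : 0 < z.re) => ?_) hU
    have hz0 : z ≠ 0 := fun h => by simp [h] at hz
    refine ((((differentiableAt_const 1).div differentiableAt_id hz0).cpow_const ?_).mul_const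
      _).differentiableWithinAt
    rw [Pi.div_apply, mem_slitPlane_iff, one_div, inv_re]
    exact Or.inl (div_pos hz (normSq_pos.2 hz0))
  have hreal : ∃ᶠ z in 𝓝[≠] (1 : ℂ), (∫ t in Ioi (0 : ℝ), (t : ℂ) ^ (a - 1) * exp (-(z * t)))
      = (1 / z) ^ a * Gamma a := by
    have hmap : Tendsto ((↑) : ℝ → ℂ) (𝓝[≠] 1) (𝓝[≠] 1) :=
      continuous_ofReal.continuousWithinAt.tendsto_nhdsWithin fun r hr => by simpa using hr
    refine hmap.frequently (Eventually.frequently ?_)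
    filter_upwards [nhdsWithin_le_nhds (Ioi_mem_nhds one_pos)] with r hr
    exact Complex.integral_cpow_mul_exp_neg_mul_Ioi ha hr
  exact hlhs.eqOn_of_preconnected_of_frequently_eq hrhs (convex_halfSpace_re_gt 0).isPreconnected
    (by simp [U]) hreal hz

theorem re_neg_mul_ofReal_nonpos {z : ℂ} (hz : 0 ≤ z.re) {t : ℝ} (ht : 0 ≤ t) :
    (-(z * t)).re ≤ 0 := by
  simpa using mul_nonneg hz ht

theorem norm_cexp_neg_mul_sub_one_mul_rpow_le {z : ℂ} (hz : 0 ≤ z.re) (α : ℝ) {t : ℝ}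
    (ht : 0 < t) :
    ‖(exp (-(z * t)) - 1) * ((t ^ (-α - 1) : ℝ) : ℂ)‖
      ≤ if t ≤ 1 then ‖z‖ * t ^ (-α) else 2 * t ^ (-α - 1) := by
  have hre := re_neg_mul_ofReal_nonpos hz ht.le
  rw [norm_mul, norm_real, Real.norm_of_nonneg (by positivity)]
  split_ifs
  · calc ‖exp (-(z * t)) - 1‖ * t ^ (-α - 1) ≤ ‖z‖ * t * t ^ (-α - 1) := by
          gcongr
          simpa [norm_mul, Real.norm_of_nonneg ht.le] using
            norm_cexp_sub_one_le_norm_of_re_nonpos hre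
      _ = ‖z‖ * t ^ (-α) := by
          rw [Real.rpow_sub_one ht.ne']
          field_simp
  · gcongr
    exact norm_cexp_sub_one_le_two_of_re_nonpos hre

theorem integrableOn_ite_rpow_Ioi (M : ℝ) {α : ℝ} (hα0 : 0 < α) (hα1 : α < 1) :
    IntegrableOn (fun t : ℝ => if t ≤ 1 then M * t ^ (-α) else 2 * t ^ (-α - 1)) (Ioi 0) := by
  rw [← Ioc_union_Ioi_eq_Ioi zero_le_one]
  refine IntegrableOn.union ?_ ?_
  · have h : IntegrableOn (fun t : ℝ => M * t ^ (-α)) (Ioc 0 1) :=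
      ((intervalIntegral.intervalIntegrable_rpow' (by linarith)).1).const_mul M
    exact h.congr_fun (fun t ht => by simp [ht.2]) measurableSet_Ioc
  · have h : IntegrableOn (fun t : ℝ => 2 * t ^ (-α - 1)) (Ioi 1) :=
      (integrableOn_Ioi_rpow_of_lt (by linarith) one_pos).const_mul 2
    exact h.congr_fun (fun t (ht : 1 < t) => by simp [not_le.2 ht]) measurableSet_Ioi

theorem integrableOn_cexp_neg_mul_sub_one_mul_rpow {z : ℂ} (hz : 0 ≤ z.re) {α : ℝ}
    (hα0 : 0 < α) (hα1 : α < 1) :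
    IntegrableOn (fun t : ℝ => (exp (-(z * t)) - 1) * ((t ^ (-α - 1) : ℝ) : ℂ)) (Ioi 0) := by
  refine (integrableOn_ite_rpow_Ioi ‖z‖ hα0 hα1).mono' ?_ ?_
  · exact ((by fun_prop : Continuous fun t : ℝ => exp (-(z * t)) - 1).continuousOn.mul
      (continuousOn_ofReal_rpow_Ioi _)).aestronglyMeasurable measurableSet_Ioi
  · filter_upwards [ae_restrict_mem measurableSet_Ioi] with t ht
    exact norm_cexp_neg_mul_sub_one_mul_rpow_le hz α ht

theorem tendsto_cexp_neg_mul_sub_one_mul_rpow_nhdsGT {z : ℂ} (hz : 0 ≤ z.re) {α : ℝ}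
    (hα1 : α < 1) :
    Tendsto (fun t : ℝ => (exp (-(z * t)) - 1) * ((t ^ (-α) : ℝ) : ℂ)) (𝓝[>] 0) (𝓝 0) := by
  have hlim : Tendsto (fun t : ℝ => ‖z‖ * t ^ (1 - α)) (𝓝[>] 0) (𝓝 0) := by
    have := (Real.continuousAt_rpow_const 0 (1 - α) (Or.inr (by linarith))).tendsto
    rw [Real.zero_rpow (by linarith)] at this
    simpa using (this.mono_left nhdsWithin_le_nhds).const_mul ‖z‖
  refine squeeze_zero_norm' ?_ hlim
  filter_upwards [self_mem_nhdsWithin] with t (ht : 0 < t)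
  have hexp := norm_cexp_sub_one_le_norm_of_re_nonpos (re_neg_mul_ofReal_nonpos hz ht.le)
  rw [norm_neg, norm_mul, norm_real, Real.norm_of_nonneg ht.le] at hexp
  calc ‖(exp (-(z * t)) - 1) * ((t ^ (-α) : ℝ) : ℂ)‖ ≤ ‖z‖ * t * t ^ (-α) := by
        rw [norm_mul, norm_real, Real.norm_of_nonneg (by positivity)]
        gcongr
    _ = ‖z‖ * t ^ (1 - α) := by
        rw [Real.rpow_sub ht, Real.rpow_one, Real.rpow_neg ht.le]
        ring

theorem tendsto_cexp_neg_mul_sub_one_mul_rpow_atTop {z : ℂ} (hz : 0 ≤ z.re) {α : ℝ}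
    (hα0 : 0 < α) :
    Tendsto (fun t : ℝ => (exp (-(z * t)) - 1) * ((t ^ (-α) : ℝ) : ℂ)) atTop (𝓝 0) := by
  refine squeeze_zero_norm' ?_ (by simpa using (tendsto_rpow_neg_atTop hα0).const_mul 2)
  filter_upwards [eventually_gt_atTop 0] with t ht
  rw [norm_mul, norm_real, Real.norm_of_nonneg (by positivity)]
  gcongr
  exact norm_cexp_sub_one_le_two_of_re_nonpos (re_neg_mul_ofReal_nonpos hz ht.le)

theorem mul_one_div_cpow_one_sub {z : ℂ} (hz : z ∈ slitPlane) (a : ℂ) :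
    z * (1 / z) ^ (1 - a) = z ^ a := by
  have hz0 := slitPlane_ne_zero hz
  rw [one_div, inv_cpow _ _ (slitPlane_arg_ne_pi hz), cpow_sub _ _ hz0, cpow_one]
  field_simp

theorem integral_cexp_neg_mul_sub_one_mul_rpow {z : ℂ} (hz : 0 < z.re) {α : ℝ}
    (hα0 : 0 < α) (hα1 : α < 1) :
    ∫ t in Ioi (0 : ℝ), (exp (-(z * t)) - 1) * ((t ^ (-α - 1) : ℝ) : ℂ)
      = -(Gamma (1 - α) / α) * z ^ (α : ℂ) := by
  have hu : ∀ t ∈ Ioi (0 : ℝ),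
      HasDerivAt (fun t : ℝ => exp (-(z * t)) - 1) (exp (-(z * t)) * -z) t := fun t _ => by
    simpa using ((((hasDerivAt_id t).ofReal_comp).const_mul (-z)).cexp).sub_const 1
  have hv : ∀ t ∈ Ioi (0 : ℝ), HasDerivAt (fun t : ℝ => ((t ^ (-α) : ℝ) : ℂ))
      ((-α * t ^ (-α - 1) : ℝ) : ℂ) t := fun t (ht : 0 < t) =>
    (Real.hasDerivAt_rpow_const (Or.inl ht.ne')).ofReal_comp
  have huv' : ∀ t : ℝ, (exp (-(z * t)) - 1) * ((-α * t ^ (-α - 1) : ℝ) : ℂ)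
      = -α * ((exp (-(z * t)) - 1) * ((t ^ (-α - 1) : ℝ) : ℂ)) := fun t => by
    push_cast
    ring
  have hu'v : ∀ t ∈ Ioi (0 : ℝ), exp (-(z * t)) * -z * ((t ^ (-α) : ℝ) : ℂ)
      = -z * ((t : ℂ) ^ ((1 - α : ℂ) - 1) * exp (-(z * t))) := fun t (ht : 0 < t) => by
    rw [ofReal_cpow ht.le, sub_sub_cancel_left, ofReal_neg]
    ring
  have key := integral_Ioi_mul_deriv_eq_deriv_mul hu hv
    (IntegrableOn.congr_fun ((integrableOn_cexp_neg_mul_sub_one_mul_rpow hz.le hα0 hα1).const_mul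
      (-α : ℂ)) (fun t _ => (huv' t).symm) measurableSet_Ioi)
    (IntegrableOn.congr_fun ((integrableOn_cpow_mul_cexp_neg_mul_Ioi (by simpa using hα1)
      hz).const_mul (-z)) (fun t ht => (hu'v t ht).symm) measurableSet_Ioi)
    (tendsto_cexp_neg_mul_sub_one_mul_rpow_nhdsGT hz.le hα1)
    (tendsto_cexp_neg_mul_sub_one_mul_rpow_atTop hz.le hα0)
  rw [setIntegral_congr_fun measurableSet_Ioi hu'v] at key
  simp_rw [huv'] at key
  rw [integral_const_mul, integral_const_mul,
    integral_cpow_mul_cexp_neg_mul_Ioi (a := 1 - α) (by simpa using hα1) hz] at key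
  have hpow := mul_one_div_cpow_one_sub (mem_slitPlane_iff.2 (Or.inl hz)) (α : ℂ)
  have hα : (α : ℂ) ≠ 0 := ofReal_ne_zero.2 hα0.ne'
  field_simp
  linear_combination (-1 : ℂ) * key - Gamma (1 - α) * hpow

theorem continuousOn_integral_cexp_neg_mul_sub_one_mul_rpow {α : ℝ} (hα0 : 0 < α) (hα1 : α < 1) :
    ContinuousOn (fun z : ℂ => ∫ t in Ioi (0 : ℝ), (exp (-(z * t)) - 1) * ((t ^ (-α - 1) : ℝ) : ℂ))
      {z | 0 ≤ z.re} := by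
  intro z₀ _
  refine continuousWithinAt_of_dominated
    (bound := fun t : ℝ => if t ≤ 1 then (‖z₀‖ + 1) * t ^ (-α) else 2 * t ^ (-α - 1))
    (Eventually.of_forall fun z => ?_) ?_ (integrableOn_ite_rpow_Ioi _ hα0 hα1)
    (Eventually.of_forall fun t => (by fun_prop : Continuous fun z : ℂ =>
      (exp (-(z * t)) - 1) * ((t ^ (-α - 1) : ℝ) : ℂ)).continuousWithinAt)
  · exact ((by fun_prop : Continuous fun t : ℝ => exp (-(z * t)) - 1).continuousOn.mul
      (continuousOn_ofReal_rpow_Ioi _)).aestronglyMeasurable measurableSet_Ioi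
  · filter_upwards [self_mem_nhdsWithin, nhdsWithin_le_nhds (Metric.ball_mem_nhds z₀ one_pos)]
      with z (hz : 0 ≤ z.re) hball
    filter_upwards [ae_restrict_mem measurableSet_Ioi] with t (ht : 0 < t)
    refine (norm_cexp_neg_mul_sub_one_mul_rpow_le hz α ht).trans ?_
    have : ‖z‖ ≤ ‖z₀‖ + 1 := by
      have := norm_le_norm_add_norm_sub' z z₀
      rw [← dist_eq_norm] at this
      linarith [Metric.mem_ball.1 hball]
    split_ifs
    · gcongr
    · rfl

theorem integral_cexp_neg_mul_sub_one_mul_rpow_of_re_nonneg {z : ℂ} (hz : 0 ≤ z.re) (hz0 : z ≠ 0)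
    {α : ℝ} (hα0 : 0 < α) (hα1 : α < 1) :
    ∫ t in Ioi (0 : ℝ), (exp (-(z * t)) - 1) * ((t ^ (-α - 1) : ℝ) : ℂ)
      = -(Gamma (1 - α) / α) * z ^ (α : ℂ) := by
  have hpath : Tendsto (fun x : ℝ => z + x) (𝓝[>] 0) (𝓝[{w | 0 ≤ w.re}] z) := by
    refine tendsto_nhdsWithin_iff.2 ⟨?_, ?_⟩
    · simpa using ((continuous_ofReal.tendsto 0).const_add z).mono_left nhdsWithin_le_nhds
    · filter_upwards [self_mem_nhdsWithin] with x (hx : 0 < x)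
      simpa using add_nonneg hz hx.le
  have hslit : z ∈ slitPlane := by
    rcases hz.lt_or_eq with h | h
    · exact mem_slitPlane_iff.2 (Or.inl h)
    · exact mem_slitPlane_iff.2 (Or.inr fun him => hz0 (Complex.ext h.symm him))
  refine tendsto_nhds_unique
    ((continuousOn_integral_cexp_neg_mul_sub_one_mul_rpow hα0 hα1 z hz).tendsto.comp hpath) ?_
  refine Tendsto.congr' ?_ (((continuousAt_cpow_const hslit).tendsto.comp
    (hpath.mono_right nhdsWithin_le_nhds)).const_mul (-(Gamma (1 - α) / α)))
  filter_upwards [self_mem_nhdsWithin] with x (hx : 0 < x)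
  exact (integral_cexp_neg_mul_sub_one_mul_rpow (by simpa using add_pos_of_nonneg_of_pos hz hx)
    hα0 hα1).symm

section Primitives

open intervalIntegral

variable {E : Type*} [NormedAddCommGroup E] [NormedSpace ℝ E]

theorem tendsto_intervalIntegral_nhdsGT {g : ℝ → E} {a b : ℝ} (hab : a < b)
    (hg : IntegrableOn g (Ioc a b)) :
    Tendsto (fun x => ∫ t in a..x, g t) (𝓝[>] a) (𝓝 0) := by
  have hcont := continuousOn_primitive_interval' (μ := volume)
    ((intervalIntegrable_iff_integrableOn_Ioc_of_le hab.le).2 hg) left_mem_uIcc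
  have := (hcont a left_mem_uIcc).tendsto
  rw [integral_same] at this
  refine this.mono_left (nhdsWithin_le_of_mem ?_)
  filter_upwards [Ioc_mem_nhdsGT hab] with x hx
  rw [uIcc_of_le hab.le]
  exact Ioc_subset_Icc_self hx

theorem tendsto_setIntegral_Ioi_nhdsGT {h : ℝ → E} {a : ℝ} (hh : IntegrableOn h (Ioi a)) :
    Tendsto (fun x => ∫ t in Ioi x, h t) (𝓝[>] a) (𝓝 (∫ t in Ioi a, h t)) := by
  have hlim := (tendsto_intervalIntegral_nhdsGT (lt_add_one a)
    (hh.mono_set Ioc_subset_Ioi_self)).const_sub (∫ t in Ioi a, h t)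
  rw [sub_zero] at hlim
  refine hlim.congr' ?_
  filter_upwards [self_mem_nhdsWithin] with x (hx : a < x)
  rw [sub_eq_iff_eq_add', integral_of_le hx.le, ← setIntegral_union (Ioc_disjoint_Ioi le_rfl)
    measurableSet_Ioi (hh.mono_set Ioc_subset_Ioi_self) (hh.mono_set (Ioi_subset_Ioi hx.le)),
    Ioc_union_Ioi_eq_Ioi hx.le]

theorem tendsto_intervalIntegral_atTop_of_eqOn_add {φ g h : ℝ → E} {G : E} {ε : ℝ} (hε : 0 ≤ ε)
    (hg : ∀ R, IntegrableOn g (Ioc 0 R)) (hG : Tendsto (fun R => ∫ t in (0 : ℝ)..R, g t) atTop (𝓝 G))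
    (hh : IntegrableOn h (Ioi ε)) (hφ : EqOn φ (g + h) (Ici ε)) :
    Tendsto (fun R => ∫ t in ε..R, φ t) atTop
      (𝓝 ((G - ∫ t in (0 : ℝ)..ε, g t) + ∫ t in Ioi ε, h t)) := by
  refine ((hG.sub_const _).add (intervalIntegral_tendsto_integral_Ioi ε hh tendsto_id)).congr' ?_
  filter_upwards [eventually_ge_atTop ε] with R hR
  have hgi : ∀ x, 0 ≤ x → IntervalIntegrable g volume 0 x := fun x hx =>
    (intervalIntegrable_iff_integrableOn_Ioc_of_le hx).2 (hg x)
  have hhi : IntervalIntegrable h volume ε R :=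
    (intervalIntegrable_iff_integrableOn_Ioc_of_le hR).2 (hh.mono_set Ioc_subset_Ioi_self)
  rw [integral_interval_sub_left (hgi R (hε.trans hR)) (hgi ε hε), id,
    ← integral_add ((hgi ε hε).symm.trans (hgi R (hε.trans hR))) hhi]
  refine integral_congr fun t ht => (hφ ?_).symm
  rw [uIcc_of_le hR] at ht
  exact ht.1

end Primitives

theorem integrableOn_cexp_mul_rpow_Ioi (ω : ℝ) {s ε : ℝ} (hs : s < -1) (hε : 0 < ε) :
    IntegrableOn (fun t : ℝ => exp (I * ω * t) * ((t ^ s : ℝ) : ℂ)) (Ioi ε) := by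
  refine (integrableOn_Ioi_rpow_of_lt hs hε).mono' ?_ ?_
  · exact ((by fun_prop : Continuous fun t : ℝ => exp (I * ω * t)).continuousOn.mul
      ((continuousOn_ofReal_rpow_Ioi s).mono (Ioi_subset_Ioi hε.le))).aestronglyMeasurable
      measurableSet_Ioi
  · filter_upwards [ae_restrict_mem measurableSet_Ioi] with t (ht : ε < t)
    rw [norm_mul, norm_exp, norm_real, Real.norm_of_nonneg (Real.rpow_nonneg (hε.trans ht).le s)]
    simp

theorem cpow_neg_I_mul_ofReal {ω : ℝ} (hω : 0 < ω) (a : ℂ) :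
    (-(I * ω)) ^ a = (ω : ℂ) ^ a * exp (-(Real.pi * I * a / 2)) := by
  have hlog : log (-(I * ω)) = Real.log ω - Real.pi / 2 * I := by
    rw [show -(I * ω) = (ω : ℂ) * -I by ring, log_ofReal_mul hω (by simp), log_neg_I]
    ring
  rw [cpow_def_of_ne_zero (by simp [hω.ne']), cpow_def_of_ne_zero (by simp [hω.ne']), hlog,
    ← exp_add, ← ofReal_log hω.le]
  ring_nf

theorem tendsto_integral_Ioi_cexp_mul_rpow_sub {ω α : ℝ} (hω : 0 < ω) (hα0 : 0 < α)
    (hα1 : α < 1) :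
    Tendsto (fun ε : ℝ => (∫ t in Ioi ε, exp (I * ω * t) * ((t ^ (-α - 1) : ℝ) : ℂ))
        - 1 / (α * ((ε ^ α : ℝ) : ℂ))) (𝓝[>] 0)
      (𝓝 (exp (Real.pi * I * (2 - α) / 2) * ((ω ^ α : ℝ) : ℂ) / α * Gamma (1 - α))) := by
  have hexp : ∀ t : ℝ, exp (-(-(I * ω) * t)) = exp (I * ω * t) := fun t => by ring_nf
  have hint := integrableOn_cexp_neg_mul_sub_one_mul_rpow (z := -(I * ω)) (by simp) hα0 hα1
  have hval := integral_cexp_neg_mul_sub_one_mul_rpow_of_re_nonneg (z := -(I * ω)) (by simp)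
    (by simp [hω.ne']) hα0 hα1
  simp_rw [hexp] at hint hval
  have hsplit : ∀ ε : ℝ, 0 < ε → (∫ t in Ioi ε, exp (I * ω * t) * ((t ^ (-α - 1) : ℝ) : ℂ))
      - 1 / (α * ((ε ^ α : ℝ) : ℂ))
      = ∫ t in Ioi ε, (exp (I * ω * t) - 1) * ((t ^ (-α - 1) : ℝ) : ℂ) := by
    intro ε hε
    have hpow : IntegrableOn (fun t : ℝ => ((t ^ (-α - 1) : ℝ) : ℂ)) (Ioi ε) :=
      (integrableOn_Ioi_rpow_of_lt (by linarith) hε).ofReal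
    have hpow_int : ∫ t in Ioi ε, ((t ^ (-α - 1) : ℝ) : ℂ) = 1 / (α * ((ε ^ α : ℝ) : ℂ)) := by
      rw [integral_complex_ofReal, integral_Ioi_rpow_of_lt (by linarith) hε, sub_add_cancel,
        Real.rpow_neg hε.le]
      push_cast
      field_simp
    rw [← hpow_int, ← integral_sub (integrableOn_cexp_mul_rpow_Ioi ω (by linarith) hε) hpow]
    congr 1 with t
    ring
  have hlim : exp (Real.pi * I * (2 - α) / 2) * ((ω ^ α : ℝ) : ℂ) / α * Gamma (1 - α)
      = ∫ t in Ioi (0 : ℝ), (exp (I * ω * t) - 1) * ((t ^ (-α - 1) : ℝ) : ℂ) := by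
    rw [hval, cpow_neg_I_mul_ofReal hω, ← ofReal_cpow hω.le,
      show (Real.pi * I * (2 - α) / 2 : ℂ) = Real.pi * I + -(Real.pi * I * α / 2) by ring,
      exp_add, exp_pi_mul_I]
    ring
  rw [hlim]
  refine (tendsto_setIntegral_Ioi_nhdsGT hint).congr' ?_
  filter_upwards [self_mem_nhdsWithin] with ε hε
  exact (hsplit ε hε).symm

open Filter MeasureTheory Set intervalIntegral Asymptotics

theorem hadamard_finite_part_decomposition_general
    (ω α : ℝ) (f : ℝ → ℂ) (a₀ G : ℂ)
    (hω : 0 < ω) (hα0 : 0 < α) (hα1 : α < 1)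
    (hgi : ∀ R : ℝ, IntegrableOn (fun t : ℝ =>
      Complex.exp (Complex.I * ω * t) * (f t - a₀ * ((t ^ (-α) : ℝ) : ℂ)) / t) (Ioc 0 R))
    (hG : Tendsto (fun R : ℝ => ∫ t in (0 : ℝ)..R,
        Complex.exp (Complex.I * ω * t) * (f t - a₀ * ((t ^ (-α) : ℝ) : ℂ)) / t)
      atTop (nhds G)) :
    ∃ J : ℝ → ℂ,
      (∀ ε : ℝ, 0 < ε → Tendsto (fun R : ℝ => ∫ t in ε..R,
          Complex.exp (Complex.I * ω * t) * f t / t) atTop (nhds (J ε))) ∧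
      Tendsto (fun ε : ℝ => J ε - a₀ / (α * ((ε ^ α : ℝ) : ℂ)))
        (nhdsWithin 0 (Ioi 0))
        (nhds (Complex.exp (Real.pi * Complex.I * (2 - α) / 2) * ((ω ^ α : ℝ) : ℂ) / α *
          Complex.Gamma (1 - α) * a₀ + G)) := by
  set g : ℝ → ℂ := fun t => exp (I * ω * t) * (f t - a₀ * ((t ^ (-α) : ℝ) : ℂ)) / t
  set k : ℝ → ℂ := fun t => exp (I * ω * t) * ((t ^ (-α - 1) : ℝ) : ℂ)
  refine ⟨fun ε => (G - ∫ t in (0 : ℝ)..ε, g t) + ∫ t in Ioi ε, a₀ * k t, fun ε hε => ?_, ?_⟩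
  · refine tendsto_intervalIntegral_atTop_of_eqOn_add hε.le hgi hG
      ((integrableOn_cexp_mul_rpow_Ioi ω (by linarith) hε).const_mul a₀) fun t (ht : ε ≤ t) => ?_
    have ht0 : (t : ℂ) ≠ 0 := ofReal_ne_zero.2 (hε.trans_le ht).ne'
    simp only [g, k, Pi.add_apply, Real.rpow_sub_one (hε.trans_le ht).ne']
    push_cast
    field_simp
    ring
  · have hlim := (tendsto_const_nhds (x := G)).sub (tendsto_intervalIntegral_nhdsGT one_pos (hgi 1))
      |>.add ((tendsto_integral_Ioi_cexp_mul_rpow_sub hω hα0 hα1).const_mul a₀)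
    rw [sub_zero] at hlim
    convert hlim using 2 with ε
    · dsimp only
      rw [MeasureTheory.integral_const_mul]
      ring
    · ring

/-- Decomposition (2.19), case 0 < α < 1: the Hadamard finite-part integral
⨎_0^∞ e^{iωt} f(t)/t dt exists and equals
(e^{iπ(2−α)/2} ω^α / α) Γ(1−α) a₀ + ∫_0^∞ e^{iωt}(f(t) − a₀ t^{−α})/t dt. -/
theorem hadamard_finite_part_decomposition
    (ω α : ℝ) (f : ℝ → ℂ) (a₀ G : ℂ)
    (hω : 0 < ω) (hα0 : 0 < α) (hα1 : α < 1)
    (hloc : LocallyIntegrableOn f (Ioi 0))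
    (hasymp : (fun t : ℝ => f t - a₀ * ((t ^ (-α) : ℝ) : ℂ))
      =O[nhdsWithin 0 (Ioi 0)] fun t : ℝ => t ^ (1 - α))
    (hgi : ∀ R : ℝ, IntegrableOn (fun t : ℝ =>
      Complex.exp (Complex.I * ω * t) * (f t - a₀ * ((t ^ (-α) : ℝ) : ℂ)) / t) (Ioc 0 R))
    (hG : Tendsto (fun R : ℝ => ∫ t in (0 : ℝ)..R,
        Complex.exp (Complex.I * ω * t) * (f t - a₀ * ((t ^ (-α) : ℝ) : ℂ)) / t)
      atTop (nhds G)) :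
    ∃ J : ℝ → ℂ,
      (∀ ε : ℝ, 0 < ε → Tendsto (fun R : ℝ => ∫ t in ε..R,
          Complex.exp (Complex.I * ω * t) * f t / t) atTop (nhds (J ε))) ∧
      Tendsto (fun ε : ℝ => J ε - a₀ / (α * ((ε ^ α : ℝ) : ℂ)))
        (nhdsWithin 0 (Ioi 0))
        (nhds (Complex.exp (Real.pi * Complex.I * (2 - α) / 2) * ((ω ^ α : ℝ) : ℂ) / α *
          Complex.Gamma (1 - α) * a₀ + G)) :=
  hadamard_finite_part_decomposition_general ω α f a₀ G hω hα0 hα1 hgi hG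
end

section
/- Let ω > 0, 0 < x < a, d with 0 ≤ d < ω, and let f be analytic on the open first quadrant {z : Re z > 0, Im z > 0}, continuous on its closure minus the origin, with constants M > 0, δ < 1 such that |f(z)| ≤ M·|z|^δ·e^{d·Im z} for all z in the closed first quadrant with |z| sufficiently large. Then the improper integral lim_{R→∞} ∫_a^R e^{iωt} f(t)/(t−x) dt exists and equals i·e^{iωa}·∫_0^∞ e^{−ωp}·f(a+ip)/(a−x+ip) dp. -/
open Filter MeasureTheory Set intervalIntegral

/-! The integrand `g z = exp (I ω z) f z / (z - x)` is holomorphic on the quadrant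
`Re z > a, Im z > 0`, continuous up to its boundary, and, since `δ < 1`,
`exp ((ω - d) Im z) ‖g z‖ → 0` as `z → ∞` in the closed quadrant. Cauchy's theorem on the
rectangle `[a, R] × [0, Y]` expresses `∫ t in a..R, g t` through the other three sides. As
`Y → ∞` the top side vanishes, being bounded by `(R - a) exp (-(ω - d) Y)`; as `R → ∞` the right
side vanishes, its integrand being uniformly small times `exp (-(ω - d) y)`. Only the left side
`I ∫ y in Ioi 0, g (a + y I)` survives. -/

open Complex Bornology Topology

lemma exists_norm_le_mul_exp_of_tendsto {F : Type*} [Norm F] {g : ℂ → F} {S : Set ℂ} {c : ℝ}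
    (hdecay : Tendsto (fun z : ℂ => Real.exp (c * z.im) * ‖g z‖) (cobounded ℂ ⊓ 𝓟 S) (𝓝 0))
    {η : ℝ} (hη : 0 < η) :
    ∃ R₁, ∀ z ∈ S, R₁ ≤ ‖z‖ → ‖g z‖ ≤ η * Real.exp (-c * z.im) := by
  have h := eventually_inf_principal.1 (hdecay.eventually (ge_mem_nhds hη))
  rw [← comap_norm_atTop, eventually_comap, eventually_atTop] at h
  obtain ⟨R₁, hR₁⟩ := h
  refine ⟨R₁, fun z hz hzR => ?_⟩
  rw [neg_mul, Real.exp_neg, ← div_eq_mul_inv, le_div_iff₀ (Real.exp_pos _), mul_comm]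
  exact hR₁ _ hzR z rfl hz

lemma tendsto_exp_neg_mul_atTop {c : ℝ} (hc : 0 < c) :
    Tendsto (fun y : ℝ => Real.exp (-c * y)) atTop (𝓝 0) :=
  Real.tendsto_exp_comp_nhds_zero.2 (tendsto_id.const_mul_atTop_of_neg (neg_lt_zero.2 hc))

lemma ofReal_add_mul_I_mem_reProdIm {s t : Set ℝ} {u v : ℝ} :
    (u + v * I : ℂ) ∈ s ×ℂ t ↔ u ∈ s ∧ v ∈ t := by
  simp [mem_reProdIm]

lemma le_norm_ofReal_add_mul_I (u v : ℝ) : v ≤ ‖(u + v * I : ℂ)‖ :=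
  (le_abs_self v).trans (by simpa using abs_im_le_norm (u + v * I))

section QuadrantRotation

variable {E : Type*} [NormedAddCommGroup E] {g : ℂ → E} {a c : ℝ}

lemma integrableOn_Ioi_vertical (hc : 0 < c) (hcont : ContinuousOn g (Ici a ×ℂ Ici 0))
    (hdecay : Tendsto (fun z : ℂ => Real.exp (c * z.im) * ‖g z‖)
      (cobounded ℂ ⊓ 𝓟 (Ici a ×ℂ Ici 0)) (𝓝 0))
    {b : ℝ} (hb : a ≤ b) :
    IntegrableOn (fun y : ℝ => g (b + y * I)) (Ioi 0) := by
  obtain ⟨R₁, hR₁⟩ := exists_norm_le_mul_exp_of_tendsto hdecay one_pos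
  have hline : ContinuousOn (fun y : ℝ => g (b + y * I)) (Ici 0) :=
    hcont.comp (by fun_prop) fun y hy => ofReal_add_mul_I_mem_reProdIm.2 ⟨hb, hy⟩
  have hbigO : (fun y : ℝ => g (b + y * I)) =O[atTop] fun y => Real.exp (-c * y) := by
    refine Asymptotics.IsBigO.of_bound 1 ?_
    filter_upwards [eventually_ge_atTop (max R₁ 0)] with y hy
    rw [Real.norm_of_nonneg (Real.exp_pos _).le]
    simpa using hR₁ _ (ofReal_add_mul_I_mem_reProdIm.2 ⟨hb, (le_max_right _ _).trans hy⟩)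
      ((le_max_left _ _).trans (hy.trans (le_norm_ofReal_add_mul_I b y)))
  exact (integrableOn_Ici_iff_integrableOn_Ioi).mp <|
    (hline.locallyIntegrableOn measurableSet_Ici).integrableOn_of_isBigO_atTop hbigO
      ⟨Ioi 0, Ioi_mem_atTop 0, exp_neg_integrableOn_Ioi 0 hc⟩

lemma tendsto_intervalIntegral_horizontal_atTop_zero [NormedSpace ℝ E] (hc : 0 < c)
    (hdecay : Tendsto (fun z : ℂ => Real.exp (c * z.im) * ‖g z‖)
      (cobounded ℂ ⊓ 𝓟 (Ici a ×ℂ Ici 0)) (𝓝 0))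
    {R : ℝ} (hR : a ≤ R) :
    Tendsto (fun Y : ℝ => ∫ t in a..R, g (t + Y * I)) atTop (𝓝 0) := by
  obtain ⟨R₁, hR₁⟩ := exists_norm_le_mul_exp_of_tendsto hdecay one_pos
  refine squeeze_zero_norm' (a := fun Y => Real.exp (-c * Y) * |R - a|) ?_ ?_
  · filter_upwards [eventually_ge_atTop (max R₁ 0)] with Y hY
    refine norm_integral_le_of_norm_le_const fun t ht => ?_
    rw [uIoc_of_le hR] at ht
    simpa using hR₁ _ (ofReal_add_mul_I_mem_reProdIm.2 ⟨ht.1.le, (le_max_right _ _).trans hY⟩)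
      ((le_max_left _ _).trans (hY.trans (le_norm_ofReal_add_mul_I t Y)))
  · simpa using (tendsto_exp_neg_mul_atTop hc).mul_const |R - a|

lemma tendsto_integral_vertical_atTop_zero [NormedSpace ℝ E] (hc : 0 < c)
    (hdecay : Tendsto (fun z : ℂ => Real.exp (c * z.im) * ‖g z‖)
      (cobounded ℂ ⊓ 𝓟 (Ici a ×ℂ Ici 0)) (𝓝 0)) :
    Tendsto (fun R : ℝ => ∫ y in Ioi (0 : ℝ), g (R + y * I)) atTop (𝓝 0) := by
  rw [Metric.tendsto_nhds]
  intro ε hε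
  obtain ⟨R₁, hR₁⟩ := exists_norm_le_mul_exp_of_tendsto hdecay (half_pos (mul_pos hε hc))
  have hexp : ∫ y in Ioi (0 : ℝ), Real.exp (-c * y) = 1 / c := by
    simpa [neg_div, div_neg] using integral_exp_mul_Ioi (neg_lt_zero.2 hc) 0
  filter_upwards [eventually_ge_atTop (max R₁ a)] with R hR
  have hbound : ‖∫ y in Ioi (0 : ℝ), g (R + y * I)‖ ≤
      ∫ y in Ioi (0 : ℝ), ε * c / 2 * Real.exp (-c * y) := by
    refine norm_integral_le_of_norm_le ((exp_neg_integrableOn_Ioi 0 hc).const_mul _) ?_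
    filter_upwards [ae_restrict_mem measurableSet_Ioi] with y hy
    simpa using hR₁ _
      (ofReal_add_mul_I_mem_reProdIm.2 ⟨(le_max_right _ _).trans hR, mem_Ici.2 hy.le⟩)
      ((le_max_left _ _).trans (hR.trans (by simpa using re_le_norm (R + y * I))))
  rw [dist_zero_right]
  calc _ ≤ _ := hbound
    _ = ε / 2 := by rw [MeasureTheory.integral_const_mul, hexp]; field_simp
    _ < ε := half_lt_self hε

lemma intervalIntegral_eq_rect_sides [NormedSpace ℂ E]
    (hcont : ContinuousOn g (Ici a ×ℂ Ici 0)) (hdiff : DifferentiableOn ℂ g (Ioi a ×ℂ Ioi 0))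
    {R Y : ℝ} (hR : a ≤ R) (hY : 0 ≤ Y) :
    ∫ t in a..R, g t = (I • ∫ y in (0 : ℝ)..Y, g (a + y * I)) -
      (I • ∫ y in (0 : ℝ)..Y, g (R + y * I)) + ∫ t in a..R, g (t + Y * I) := by
  have hw : ((R : ℂ) + Y * I).re = R ∧ ((R : ℂ) + Y * I).im = Y := by simp
  have h0 := integral_boundary_rect_eq_zero_of_continuousOn_of_differentiableOn g (a : ℂ)
    (R + Y * I) (hcont.mono ?_) (hdiff.mono ?_)
  · simp only [hw, ofReal_re, ofReal_im, ofReal_zero, zero_mul, add_zero] at h0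
    rw [← sub_eq_zero, ← h0]
    abel
  · rw [hw.1, hw.2, ofReal_re, ofReal_im, uIcc_of_le hR, uIcc_of_le hY]
    exact reProdIm_subset_iff.2 (prod_mono Icc_subset_Ici_self Icc_subset_Ici_self)
  · rw [hw.1, hw.2, ofReal_re, ofReal_im, min_eq_left hR, max_eq_right hR, min_eq_left hY,
      max_eq_right hY]
    exact reProdIm_subset_iff.2 (prod_mono Ioo_subset_Ioi_self Ioo_subset_Ioi_self)

lemma intervalIntegral_eq_sub_integral_vertical [NormedSpace ℂ E] [CompleteSpace E]
    (hc : 0 < c) (hcont : ContinuousOn g (Ici a ×ℂ Ici 0))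
    (hdiff : DifferentiableOn ℂ g (Ioi a ×ℂ Ioi 0))
    (hdecay : Tendsto (fun z : ℂ => Real.exp (c * z.im) * ‖g z‖)
      (cobounded ℂ ⊓ 𝓟 (Ici a ×ℂ Ici 0)) (𝓝 0))
    {R : ℝ} (hR : a ≤ R) :
    ∫ t in a..R, g t = (I • ∫ y in Ioi (0 : ℝ), g (a + y * I)) -
      I • ∫ y in Ioi (0 : ℝ), g (R + y * I) := by
  have hlim := (((intervalIntegral_tendsto_integral_Ioi 0
    (integrableOn_Ioi_vertical hc hcont hdecay le_rfl) tendsto_id).const_smul I).sub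
    ((intervalIntegral_tendsto_integral_Ioi 0
      (integrableOn_Ioi_vertical hc hcont hdecay hR) tendsto_id).const_smul I)).add
    (tendsto_intervalIntegral_horizontal_atTop_zero hc hdecay hR)
  rw [add_zero] at hlim
  refine tendsto_nhds_unique (tendsto_const_nhds.congr' ?_) hlim
  exact (eventually_ge_atTop 0).mono fun Y hY =>
    intervalIntegral_eq_rect_sides hcont hdiff hR hY

theorem tendsto_intervalIntegral_atTop_of_decay_on_quadrant [NormedSpace ℂ E] [CompleteSpace E]
    (hc : 0 < c) (hcont : ContinuousOn g (Ici a ×ℂ Ici 0))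
    (hdiff : DifferentiableOn ℂ g (Ioi a ×ℂ Ioi 0))
    (hdecay : Tendsto (fun z : ℂ => Real.exp (c * z.im) * ‖g z‖)
      (cobounded ℂ ⊓ 𝓟 (Ici a ×ℂ Ici 0)) (𝓝 0)) :
    Tendsto (fun R : ℝ => ∫ t in a..R, g t) atTop
      (𝓝 (I • ∫ y in Ioi (0 : ℝ), g (a + y * I))) := by
  have h := (tendsto_const_nhds (x := I • ∫ y in Ioi (0 : ℝ), g (a + y * I))).sub
    ((tendsto_integral_vertical_atTop_zero hc hdecay).const_smul I)
  rw [smul_zero, sub_zero] at h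
  exact h.congr' <| (eventually_ge_atTop a).mono fun R hR =>
    (intervalIntegral_eq_sub_integral_vertical hc hcont hdiff hdecay hR).symm

end QuadrantRotation

lemma norm_cexp_I_mul_ofReal_mul (ω : ℝ) (z : ℂ) :
    ‖cexp (I * ω * z)‖ = Real.exp (-(ω * z.im)) := by
  simp [norm_exp, mul_re, mul_im]

lemma cexp_I_mul_ofReal_mul_add_mul_I (ω u v : ℝ) :
    cexp (I * ω * (u + v * I)) = cexp (I * ω * u) * cexp (-(ω * v)) := by
  rw [← Complex.exp_add]
  congr 1
  linear_combination (ω * v : ℂ) * I_mul_I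

lemma continuousOn_cexp_mul_div_sub {f : ℂ → ℂ} {S : Set ℂ} (ω x : ℝ) (hf : ContinuousOn f S)
    (hS : ∀ z ∈ S, z ≠ x) : ContinuousOn (fun z => cexp (I * ω * z) * f z / (z - x)) S :=
  ((by fun_prop : Continuous fun z : ℂ => cexp (I * ω * z)).continuousOn.mul hf).div
    (by fun_prop) fun z hz => sub_ne_zero.2 (hS z hz)

lemma differentiableOn_cexp_mul_div_sub {f : ℂ → ℂ} {S : Set ℂ} (ω x : ℝ)
    (hf : ∀ z ∈ S, AnalyticAt ℂ f z) (hS : ∀ z ∈ S, z ≠ x) :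
    DifferentiableOn ℂ (fun z => cexp (I * ω * z) * f z / (z - x)) S := fun z hz => by
  have hexp : DifferentiableAt ℂ (fun z : ℂ => cexp (I * ω * z)) z := by fun_prop
  exact ((hexp.mul (hf z hz).differentiableAt).div (differentiableAt_id.sub_const (x : ℂ))
    (sub_ne_zero.2 (hS z hz))).differentiableWithinAt

lemma reProdIm_Ici_subset_quadrant_diff_zero {a : ℝ} (ha : 0 < a) :
    Ici a ×ℂ Ici 0 ⊆ {z : ℂ | 0 ≤ z.re ∧ 0 ≤ z.im} \ {0} := by
  rintro z ⟨hre, him⟩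
  refine ⟨⟨ha.le.trans hre, him⟩, ?_⟩
  rintro rfl
  exact (ha.trans_le hre).ne' rfl

lemma ne_ofReal_of_lt_re {z : ℂ} {x : ℝ} (h : x < z.re) : z ≠ x := by
  rintro rfl
  exact (ofReal_re x ▸ h).false

lemma tendsto_exp_mul_im_mul_norm_of_growth {f : ℂ → ℂ} {S : Set ℂ} {ω x M δ d : ℝ}
    (hδ : δ < 1)
    (hgrowth : ∃ R₀ : ℝ, ∀ z ∈ S, R₀ ≤ ‖z‖ → ‖f z‖ ≤ M * ‖z‖ ^ δ * Real.exp (d * z.im)) :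
    Tendsto (fun z : ℂ => Real.exp ((ω - d) * z.im) * ‖cexp (I * ω * z) * f z / (z - x)‖)
      (cobounded ℂ ⊓ 𝓟 S) (𝓝 0) := by
  obtain ⟨R₀, hR₀⟩ := hgrowth
  have hnorm : Tendsto (fun z : ℂ => ‖z‖) (cobounded ℂ ⊓ 𝓟 S) atTop :=
    tendsto_norm_cobounded_atTop.mono_left inf_le_left
  refine squeeze_zero' (g := fun z => 2 * M * ‖z‖ ^ (δ - 1))
    (Eventually.of_forall fun z => by positivity) ?_ ?_
  · filter_upwards [hnorm.eventually (eventually_ge_atTop (max R₀ (max (2 * |x|) 1))),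
      mem_inf_of_right (mem_principal_self S)] with z hz hzS
    simp only [max_le_iff] at hz
    have hr : 0 < ‖z‖ := one_pos.trans_le hz.2.2
    have hfz : Real.exp (-(d * z.im)) * ‖f z‖ ≤ M * ‖z‖ ^ δ :=
      calc _ ≤ Real.exp (-(d * z.im)) * (M * ‖z‖ ^ δ * Real.exp (d * z.im)) := by
            gcongr
            exact hR₀ z hzS hz.1
        _ = M * ‖z‖ ^ δ := by rw [mul_comm, mul_assoc, ← Real.exp_add]; simp
    have hden : ‖z‖ / 2 ≤ ‖z - x‖ := by
      have := norm_sub_norm_le z x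
      rw [norm_real, Real.norm_eq_abs] at this
      linarith
    calc Real.exp ((ω - d) * z.im) * ‖cexp (I * ω * z) * f z / (z - x)‖
        = Real.exp (-(d * z.im)) * ‖f z‖ / ‖z - x‖ := by
          rw [norm_div, norm_mul, norm_cexp_I_mul_ofReal_mul, mul_div_assoc, ← mul_assoc,
            ← Real.exp_add, ← mul_div_assoc]
          ring_nf
      _ ≤ M * ‖z‖ ^ δ / (‖z‖ / 2) :=
          div_le_div₀ ((by positivity : (0 : ℝ) ≤ _).trans hfz) hfz (half_pos hr) hden
      _ = 2 * M * ‖z‖ ^ (δ - 1) := by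
          rw [Real.rpow_sub hr, Real.rpow_one]
          field_simp
  · simpa [neg_sub] using ((tendsto_rpow_neg_atTop (sub_pos.2 hδ)).comp hnorm).const_mul (2 * M)

theorem tail_integral_rotation_general
    (ω x a M δ d : ℝ) (f : ℂ → ℂ)
    (hx : 0 < x) (hxa : x < a) (hdω : d < ω)
    (hδ : δ < 1)
    (hcont : ContinuousOn f ({z : ℂ | 0 ≤ z.re ∧ 0 ≤ z.im} \ {0}))
    (hanal : ∀ z : ℂ, 0 < z.re → 0 < z.im → AnalyticAt ℂ f z)
    (hgrowth : ∃ R₀ : ℝ, ∀ z : ℂ, 0 ≤ z.re → 0 ≤ z.im → R₀ ≤ ‖z‖ →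
      ‖f (z)‖ ≤ M * ‖z‖ ^ δ * Real.exp (d * z.im)) :
    IntegrableOn (fun p : ℝ =>
      Complex.exp (-(ω * p)) * f ((a : ℂ) + Complex.I * p) /
        ((a : ℂ) - x + Complex.I * p)) (Ioi 0) ∧
    Tendsto (fun R : ℝ => ∫ t in a..R,
        Complex.exp (Complex.I * ω * t) * f t / ((t : ℂ) - x)) atTop
      (nhds (Complex.I * Complex.exp (Complex.I * ω * a) *
        ∫ p in Ioi (0 : ℝ),
          Complex.exp (-(ω * p)) * f ((a : ℂ) + Complex.I * p) /
            ((a : ℂ) - x + Complex.I * p))) := by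
  obtain ⟨R₀, hR₀⟩ := hgrowth
  have ha : 0 < a := hx.trans hxa
  have hc : 0 < ω - d := sub_pos.2 hdω
  have hne : ∀ z ∈ Ici a ×ℂ Ici 0, z ≠ x := fun z hz => ne_ofReal_of_lt_re (hxa.trans_le hz.1)
  set g : ℂ → ℂ := fun z => cexp (I * ω * z) * f z / (z - x)
  have hgcont : ContinuousOn g (Ici a ×ℂ Ici 0) :=
    continuousOn_cexp_mul_div_sub ω x (hcont.mono (reProdIm_Ici_subset_quadrant_diff_zero ha)) hne
  have hgdiff : DifferentiableOn ℂ g (Ioi a ×ℂ Ioi 0) :=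
    differentiableOn_cexp_mul_div_sub ω x (fun z hz => hanal z (ha.trans hz.1) hz.2)
      fun z hz =>
        hne z (reProdIm_subset_iff.2 (prod_mono Ioi_subset_Ici_self Ioi_subset_Ici_self) hz)
  have hdecay := tendsto_exp_mul_im_mul_norm_of_growth (S := Ici a ×ℂ Ici 0) (ω := ω) (x := x) hδ
    ⟨R₀, fun z hz => hR₀ z (ha.le.trans hz.1) hz.2⟩
  have hline : ∀ p : ℝ, cexp (-(ω * p)) * f (a + I * p) / (a - x + I * p) =
      (cexp (I * ω * a))⁻¹ * g (a + p * I) := fun p => by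
    simp only [g, cexp_I_mul_ofReal_mul_add_mul_I]
    field_simp
    ring_nf
  refine ⟨IntegrableOn.congr_fun ((integrableOn_Ioi_vertical hc hgcont hdecay le_rfl).const_mul _)
    (fun p _ => (hline p).symm) measurableSet_Ioi, ?_⟩
  convert tendsto_intervalIntegral_atTop_of_decay_on_quadrant hc hgcont hgdiff hdecay using 2
  simp only [hline, MeasureTheory.integral_const_mul, smul_eq_mul]
  field_simp

/-- Equation (3.23): rotation of the contour for the nonsingular tail integral I₂(x). -/
theorem tail_integral_rotation
    (ω x a M δ d : ℝ) (f : ℂ → ℂ)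
    (hω : 0 < ω) (hx : 0 < x) (hxa : x < a) (hd0 : 0 ≤ d) (hdω : d < ω)
    (hM : 0 < M) (hδ : δ < 1)
    (hcont : ContinuousOn f ({z : ℂ | 0 ≤ z.re ∧ 0 ≤ z.im} \ {0}))
    (hanal : ∀ z : ℂ, 0 < z.re → 0 < z.im → AnalyticAt ℂ f z)
    (hgrowth : ∃ R₀ : ℝ, ∀ z : ℂ, 0 ≤ z.re → 0 ≤ z.im → R₀ ≤ ‖z‖ →
      ‖f (z)‖ ≤ M * ‖z‖ ^ δ * Real.exp (d * z.im)) :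
    IntegrableOn (fun p : ℝ =>
      Complex.exp (-(ω * p)) * f ((a : ℂ) + Complex.I * p) /
        ((a : ℂ) - x + Complex.I * p)) (Ioi 0) ∧
    Tendsto (fun R : ℝ => ∫ t in a..R,
        Complex.exp (Complex.I * ω * t) * f t / ((t : ℂ) - x)) atTop
      (nhds (Complex.I * Complex.exp (Complex.I * ω * a) *
        ∫ p in Ioi (0 : ℝ),
          Complex.exp (-(ω * p)) * f ((a : ℂ) + Complex.I * p) /
            ((a : ℂ) - x + Complex.I * p))) :=
  tail_integral_rotation_general ω x a M δ d f hx hxa hdω hδ hcont hanal hgrowth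
end

section
/- Let ω̃ > 0 and τ ∈ (−1, 1), and set u₁ = ω̃(1−τ), u₂ = ω̃(1+τ). Then the Cauchy principal value ⨍_{−1}^{1} e^{iω̃y}/(y−τ) dy equals cos(ω̃τ)·[Ci(u₁) − Ci(u₂)] − sin(ω̃τ)·[Si(u₁) + Si(u₂)] + i·( sin(ω̃τ)·[Ci(u₁) − Ci(u₂)] + cos(ω̃τ)·[Si(u₁) + Si(u₂)] ), where Si(u) = ∫_0^u (sin t)/t dt and Ci(u) = −lim_{R→∞} ∫_u^R (cos t)/t dt. -/
/-!
Substituting `y = τ ± t / ω` turns the truncated integral into `e^{iωτ} (J(ωε, u₁) - conj J(ωε, u₂))`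
with `J(δ, u) = ∫_δ^u e^{it} / t dt`. The cosine parts of the two `J`s differ by the constant
`∫_{u₂}^{u₁} cos t / t = c₂ - c₁`, so the divergence at `δ → 0` cancels, while the sine parts converge
because `sin t / t` extends continuously to `0`. The improper integrals `c₁, c₂` exist after one
integration by parts, which leaves the absolutely integrable `sin t / t²`.
-/

open Filter MeasureTheory Set intervalIntegral Topology

theorem Continuous.intervalIntegrable_div_of_pos {g : ℝ → ℝ} (hg : Continuous g) {a b : ℝ}
    (ha : 0 < a) (hb : 0 < b) : IntervalIntegrable (fun t => g t / t) volume a b :=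
  (hg.continuousOn.div continuousOn_id fun _ ht =>
    (lt_min ha hb |>.trans_le ht.1).ne').intervalIntegrable

theorem IntervalIntegrable.ofReal {𝕜 : Type*} [RCLike 𝕜] {f : ℝ → ℝ} {a b : ℝ} {μ : Measure ℝ}
    (hf : IntervalIntegrable f μ a b) : IntervalIntegrable (fun t => (f t : 𝕜)) μ a b :=
  ⟨hf.1.ofReal, hf.2.ofReal⟩

theorem intervalIntegral.integral_conj {f : ℝ → ℂ} {a b : ℝ} :
    ∫ t in a..b, (starRingEnd ℂ) (f t) = (starRingEnd ℂ) (∫ t in a..b, f t) := by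
  simp only [intervalIntegral, map_sub]
  rw [_root_.integral_conj, _root_.integral_conj]

theorem sub_eq_intervalIntegral_of_tendsto_atTop {E : Type*} [NormedAddCommGroup E]
    [NormedSpace ℝ E] {f : ℝ → E} {a b : ℝ} {c₁ c₂ : E} (hab : IntervalIntegrable f volume a b)
    (hf : ∀ᶠ R in atTop, IntervalIntegrable f volume a R)
    (h₁ : Tendsto (fun R => ∫ t in a..R, f t) atTop (𝓝 c₁))
    (h₂ : Tendsto (fun R => ∫ t in b..R, f t) atTop (𝓝 c₂)) :
    c₁ - c₂ = ∫ t in a..b, f t := by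
  have h₂' : Tendsto (fun R => ∫ t in b..R, f t) atTop (𝓝 (c₁ - ∫ t in a..b, f t)) :=
    (h₁.sub_const _).congr' <| hf.mono fun R hR => integral_interval_sub_left hR hab
  rw [tendsto_nhds_unique h₂ h₂']
  abel

theorem integrableOn_sin_div_sq_Ioi {u : ℝ} (hu : 0 < u) :
    IntegrableOn (fun t => Real.sin t / t ^ 2) (Ioi u) := by
  refine (integrableOn_Ioi_rpow_of_lt (by norm_num : (-2 : ℝ) < -1) hu).mono'
    ((Real.continuous_sin.measurable.div (measurable_id.pow_const 2)).aestronglyMeasurable)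
    ((ae_restrict_mem measurableSet_Ioi).mono fun t (ht : u < t) => ?_)
  have ht₀ : 0 < t := hu.trans ht
  rw [Real.rpow_neg ht₀.le, Real.rpow_two, norm_div, norm_pow, Real.norm_of_nonneg ht₀.le,
    ← one_div]
  gcongr
  exact Real.abs_sin_le_one t

theorem tendsto_sin_div_atTop : Tendsto (fun R => Real.sin R / R) atTop (𝓝 0) := by
  simp_rw [div_eq_inv_mul]
  exact tendsto_inv_atTop_zero.zero_mul_isBoundedUnder_le
    (isBoundedUnder_of ⟨1, fun R => by simpa using Real.abs_sin_le_one R⟩)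

theorem integral_cos_div_eq {u R : ℝ} (hu : 0 < u) (hR : 0 < R) :
    ∫ t in u..R, Real.cos t / t =
      Real.sin R / R - Real.sin u / u + ∫ t in u..R, Real.sin t / t ^ 2 := by
  have hpos : ∀ t ∈ uIcc u R, t ≠ 0 := fun t ht => (lt_min hu hR |>.trans_le ht.1).ne'
  have hparts := integral_mul_deriv_eq_deriv_mul (fun t ht => hasDerivAt_inv (hpos t ht))
    (fun t _ => Real.hasDerivAt_sin t)
    (ContinuousOn.intervalIntegrable <| ContinuousOn.neg <|
      (continuousOn_pow 2).inv₀ fun t ht => pow_ne_zero 2 (hpos t ht))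
    (Real.continuous_cos.intervalIntegrable _ _)
  simp only [div_eq_inv_mul, hparts, neg_mul, intervalIntegral.integral_neg, sub_neg_eq_add]

theorem exists_tendsto_integral_cos_div_atTop {u : ℝ} (hu : 0 < u) :
    ∃ c, Tendsto (fun R => ∫ t in u..R, Real.cos t / t) atTop (𝓝 c) := by
  refine ⟨0 - Real.sin u / u + ∫ t in Ioi u, Real.sin t / t ^ 2,
    ((tendsto_sin_div_atTop.sub_const _).add (intervalIntegral_tendsto_integral_Ioi u
      (integrableOn_sin_div_sq_Ioi hu) tendsto_id)).congr' ?_⟩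
  filter_upwards [eventually_gt_atTop 0] with R hR
  exact (integral_cos_div_eq hu hR).symm

theorem tendsto_integral_sin_div_nhdsWithin_zero (u : ℝ) :
    Tendsto (fun δ => ∫ t in δ..u, Real.sin t / t) (𝓝[>] 0)
      (𝓝 (∫ t in (0 : ℝ)..u, Real.sin t / t)) := by
  have hsinc : ∀ a b : ℝ, ∫ t in a..b, Real.sin t / t = ∫ t in a..b, Real.sinc t := fun a b =>
    integral_congr_ae <| (volume.ae_ne 0).mono fun t ht _ =>
      (Real.sinc_of_ne_zero ht).symm
  simp only [hsinc]
  have hcont : Continuous fun δ => ∫ t in δ..u, Real.sinc t := by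
    simpa only [integral_symm u, Pi.neg_def] using
      (continuous_primitive (fun a b => Real.continuous_sinc.intervalIntegrable (μ := volume) a b) u).neg
  exact (hcont.tendsto 0).mono_left nhdsWithin_le_nhds

theorem integral_exp_mul_I_div {δ u : ℝ} (hδ : 0 < δ) (hu : 0 < u) :
    ∫ t in δ..u, Complex.exp (t * Complex.I) / t =
      ↑(∫ t in δ..u, Real.cos t / t) + Complex.I * ↑(∫ t in δ..u, Real.sin t / t) := by
  have hsplit : ∀ t : ℝ, Complex.exp (t * Complex.I) / t =
      ↑(Real.cos t / t) + Complex.I * ↑(Real.sin t / t) := by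
    intro t
    push_cast
    rw [Complex.exp_mul_I]
    ring
  simp only [hsplit]
  rw [intervalIntegral.integral_add
      (Real.continuous_cos.intervalIntegrable_div_of_pos hδ hu).ofReal
      ((Real.continuous_sin.intervalIntegrable_div_of_pos hδ hu).ofReal.const_mul _),
    intervalIntegral.integral_const_mul, intervalIntegral.integral_ofReal,
    intervalIntegral.integral_ofReal]

theorem integral_div_sub_add_integral_div_sub (f : ℝ → ℂ) (a b τ ε : ℝ) :
    (∫ y in a..τ - ε, f y / ((y : ℂ) - τ)) + ∫ y in τ + ε..b, f y / ((y : ℂ) - τ) =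
      (∫ t in ε..b - τ, f (τ + t) / t) - ∫ t in ε..τ - a, f (τ - t) / t := by
  have h₁ := integral_comp_sub_left (a := ε) (b := τ - a)
    (fun y => f y / ((y : ℂ) - τ)) τ
  have h₂ := integral_comp_add_left (a := ε) (b := b - τ)
    (fun y => f y / ((y : ℂ) - τ)) τ
  simp only [sub_sub_cancel, add_sub_cancel, Complex.ofReal_sub, Complex.ofReal_add,
    sub_sub_cancel_left, add_sub_cancel_left, div_neg, intervalIntegral.integral_neg] at h₁ h₂
  rw [← h₁, ← h₂]
  ring

theorem integral_comp_mul_div {g : ℝ → ℂ} {c : ℝ} (hc : c ≠ 0) (a b : ℝ) :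
    ∫ t in a..b, g (c * t) / t = ∫ t in c * a..c * b, g t / t := by
  have hg : ∀ t : ℝ, g (c * t) / t = c * (g (c * t) / ↑(c * t)) := by
    intro t
    rcases eq_or_ne t 0 with rfl | ht
    · simp
    · have ht' : (t : ℂ) ≠ 0 := Complex.ofReal_ne_zero.mpr ht
      have hc' : (c : ℂ) ≠ 0 := Complex.ofReal_ne_zero.mpr hc
      push_cast
      field_simp
  simp only [hg, intervalIntegral.integral_const_mul,
    integral_comp_mul_left (fun t => g t / t) hc, Complex.real_smul,
    Complex.ofReal_inv, ← mul_assoc, mul_inv_cancel₀ (Complex.ofReal_ne_zero.mpr hc), one_mul]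

theorem integral_exp_div_sub_add_integral_exp_div_sub {ω : ℝ} (hω : ω ≠ 0) (a b τ ε : ℝ) :
    (∫ y in a..τ - ε, Complex.exp (Complex.I * ω * y) / ((y : ℂ) - τ)) +
        ∫ y in τ + ε..b, Complex.exp (Complex.I * ω * y) / ((y : ℂ) - τ) =
      Complex.exp (↑(ω * τ) * Complex.I) *
        ((∫ t in ω * ε..ω * (b - τ), Complex.exp (t * Complex.I) / t) -
          (starRingEnd ℂ) (∫ t in ω * ε..ω * (τ - a), Complex.exp (t * Complex.I) / t)) := by
  have hfwd : ∀ t : ℝ, Complex.exp (Complex.I * ω * ↑(τ + t)) / t =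
      Complex.exp (↑(ω * τ) * Complex.I) * (Complex.exp (↑(ω * t) * Complex.I) / t) := by
    intro t
    rw [← mul_div_assoc, ← Complex.exp_add]
    push_cast
    ring_nf
  have hbwd : ∀ t : ℝ, Complex.exp (Complex.I * ω * ↑(τ - t)) / t =
      Complex.exp (↑(ω * τ) * Complex.I) *
        (starRingEnd ℂ) (Complex.exp (↑(ω * t) * Complex.I) / t) := by
    intro t
    rw [map_div₀, ← Complex.exp_conj, map_mul, Complex.conj_ofReal, Complex.conj_ofReal,
      Complex.conj_I, ← mul_div_assoc, ← Complex.exp_add]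
    push_cast
    ring_nf
  rw [integral_div_sub_add_integral_div_sub]
  simp only [hfwd, hbwd, intervalIntegral.integral_const_mul, integral_conj,
    integral_comp_mul_div (g := fun s : ℝ => Complex.exp (s * Complex.I)) hω, mul_sub]

theorem tendsto_integral_exp_mul_I_div_sub_conj {u₁ u₂ c₁ c₂ : ℝ} (hu₁ : 0 < u₁) (hu₂ : 0 < u₂)
    (hc₁ : Tendsto (fun R => ∫ t in u₁..R, Real.cos t / t) atTop (𝓝 c₁))
    (hc₂ : Tendsto (fun R => ∫ t in u₂..R, Real.cos t / t) atTop (𝓝 c₂)) :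
    Tendsto (fun δ => (∫ t in δ..u₁, Complex.exp (t * Complex.I) / t) -
        (starRingEnd ℂ) (∫ t in δ..u₂, Complex.exp (t * Complex.I) / t)) (𝓝[>] 0)
      (𝓝 (↑((-c₁) - (-c₂)) + Complex.I *
        ↑((∫ t in (0 : ℝ)..u₁, Real.sin t / t) + ∫ t in (0 : ℝ)..u₂, Real.sin t / t))) := by
  have hcos : ∀ δ, 0 < δ →
      (∫ t in δ..u₁, Real.cos t / t) - ∫ t in δ..u₂, Real.cos t / t = (-c₁) - (-c₂) := by
    intro δ hδ
    have hc := sub_eq_intervalIntegral_of_tendsto_atTop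
      (Real.continuous_cos.intervalIntegrable_div_of_pos hu₂ hu₁)
      ((eventually_gt_atTop 0).mono fun R hR =>
        Real.continuous_cos.intervalIntegrable_div_of_pos hu₂ hR) hc₂ hc₁
    rw [integral_interval_sub_left
      (Real.continuous_cos.intervalIntegrable_div_of_pos hδ hu₁)
      (Real.continuous_cos.intervalIntegrable_div_of_pos hδ hu₂), ← hc]
    ring
  have hsin := (tendsto_integral_sin_div_nhdsWithin_zero u₁).add
    (tendsto_integral_sin_div_nhdsWithin_zero u₂)
  refine ((((Complex.continuous_ofReal.tendsto _).comp hsin).const_mul Complex.I).const_add _).congr' ?_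
  filter_upwards [self_mem_nhdsWithin] with δ (hδ : 0 < δ)
  rw [integral_exp_mul_I_div hδ hu₁, integral_exp_mul_I_div hδ hu₂, ← hcos δ hδ]
  simp only [Function.comp_apply, map_add, map_mul, Complex.conj_ofReal, Complex.conj_I]
  push_cast
  ring

theorem exp_ofReal_mul_I_mul_add_I_mul (x A B : ℝ) :
    Complex.exp (x * Complex.I) * (A + Complex.I * B) =
      ↑(Real.cos x * A - Real.sin x * B) + Complex.I * ↑(Real.sin x * A + Real.cos x * B) := by
  rw [Complex.exp_mul_I, ← Complex.ofReal_cos, ← Complex.ofReal_sin]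
  push_cast
  ring_nf
  rw [Complex.I_sq]
  ring

/-- Equation (3.21): explicit form of ⨍_{−1}^1 e^{iω̃y}/(y−τ) dy via Si and Ci. -/
theorem pv_finite_exp_closed_form
    (ω τ : ℝ) (hω : 0 < ω) (hτ : τ ∈ Ioo (-1 : ℝ) 1) :
    ∃ c₁ c₂ : ℝ,
      Tendsto (fun R : ℝ => ∫ t in (ω * (1 - τ))..R, Real.cos t / t) atTop (nhds c₁) ∧
      Tendsto (fun R : ℝ => ∫ t in (ω * (1 + τ))..R, Real.cos t / t) atTop (nhds c₂) ∧
      Tendsto (fun ε : ℝ =>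
          (∫ y in (-1 : ℝ)..(τ - ε), Complex.exp (Complex.I * ω * y) / ((y : ℂ) - τ)) +
          ∫ y in (τ + ε)..(1 : ℝ), Complex.exp (Complex.I * ω * y) / ((y : ℂ) - τ))
        (nhdsWithin 0 (Ioi 0))
        (nhds (((Real.cos (ω * τ) * ((-c₁) - (-c₂)) -
              Real.sin (ω * τ) * ((∫ t in (0 : ℝ)..(ω * (1 - τ)), Real.sin t / t) +
                ∫ t in (0 : ℝ)..(ω * (1 + τ)), Real.sin t / t) : ℝ) : ℂ) +
          Complex.I * ((Real.sin (ω * τ) * ((-c₁) - (-c₂)) +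
              Real.cos (ω * τ) * ((∫ t in (0 : ℝ)..(ω * (1 - τ)), Real.sin t / t) +
                ∫ t in (0 : ℝ)..(ω * (1 + τ)), Real.sin t / t) : ℝ) : ℂ))) := by
  obtain ⟨hτ₁, hτ₂⟩ := hτ
  have hu₁ : 0 < ω * (1 - τ) := mul_pos hω (by linarith)
  have hu₂ : 0 < ω * (1 + τ) := mul_pos hω (by linarith)
  obtain ⟨c₁, hc₁⟩ := exists_tendsto_integral_cos_div_atTop hu₁
  obtain ⟨c₂, hc₂⟩ := exists_tendsto_integral_cos_div_atTop hu₂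
  refine ⟨c₁, c₂, hc₁, hc₂, ?_⟩
  have hωε : Tendsto (fun ε => ω * ε) (𝓝[>] 0) (𝓝[>] 0) := by
    simpa using Filter.TendstoNhdsWithinIoi.const_mul hω (tendsto_id (x := 𝓝[>] (0 : ℝ)))
  rw [← exp_ofReal_mul_I_mul_add_I_mul]
  refine (((tendsto_integral_exp_mul_I_div_sub_conj hu₁ hu₂ hc₁ hc₂).comp hωε).const_mul _).congr ?_
  intro ε
  rw [integral_exp_div_sub_add_integral_exp_div_sub hω.ne', sub_neg_eq_add, add_comm τ 1]
  rfl
end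

section
/- Let 0 ≤ α < 1, ω̃ > 0, and for each integer k ≥ 0 let Z_k = ∫_{−1}^{1} (1+y)^{−α}·T_k(y)·e^{iω̃y} dy, where T_k is the degree-k Chebyshev polynomial of the first kind. Then for every integer n ≥ 2: iω̃(n−1)·Z_{n+1} + [2(n−α+1)(n−1) + iω̃(n−2)]·Z_n + [2n(n+α−2) − iω̃(n+1)]·Z_{n−1} − iω̃·n·Z_{n−2} = −2^{2−α}·e^{iω̃}. -/
/-! The left-hand side is `∫_{-1}^{1} F'` for `F(y) = (1 + y)^{1-α} q_n(y) e^{iω̃y}` with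
`q_n = 2(n-1) T_n - 2n T_{n-1}`. Indeed `F' = (1 + y)^{-α} r(y) e^{iω̃y}` with
`r = (1 - α) q_n + (1 + y) q_n' + iω̃ (1 + y) q_n`, and the three-term recurrence together with
`T_k' = k U_{k-1}` and `(1 + y)(U_{n-1} - U_{n-2}) = T_n + T_{n-1}` turn `r` into the combination
of `T_{n+1}, …, T_{n-2}` on the left. As `α < 1`, `F(-1) = 0`, while `F(1) = -2^{2-α} e^{iω̃}`. -/

open Filter MeasureTheory Set intervalIntegral

open Polynomial

noncomputable def rpowExpDerivative {R : Type*} [CommRing R] (a c : R) (p : R[X]) : R[X] :=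
  Polynomial.C (1 - a) * p + (1 + X) * derivative p + Polynomial.C c * ((1 + X) * p)

namespace Polynomial.Chebyshev

variable (R : Type*) [CommRing R]

theorem one_add_X_mul_U_sub_U (n : ℤ) :
    (1 + X) * (U R n - U R (n - 1)) = T R (n + 1) + T R n := by
  have h := T_eq_U_sub_X_mul_U R (n + 1)
  rw [add_sub_cancel_right] at h
  linear_combination -U_add_one R n - h - T_eq_U_sub_X_mul_U R n

noncomputable def piessensPoly (n : ℤ) : R[X] :=
  2 * ((n : R[X]) - 1) * T R n - 2 * (n : R[X]) * T R (n - 1)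

theorem piessensPoly_eval_one (n : ℤ) : (piessensPoly R n).eval 1 = -2 := by
  simp [piessensPoly, T_eval_one]; ring

theorem one_add_X_mul_piessensPoly (n : ℤ) :
    (1 + X) * piessensPoly R n = ((n : R[X]) - 1) * T R (n + 1) + ((n : R[X]) - 2) * T R n
      - ((n : R[X]) + 1) * T R (n - 1) - (n : R[X]) * T R (n - 2) := by
  rw [piessensPoly]
  linear_combination (1 - (n : R[X])) * T_add_one R n + (n : R[X]) * T_eq R n

theorem piessensPoly_add_one_add_X_mul_derivative (n : ℤ) :
    piessensPoly R n + (1 + X) * derivative (piessensPoly R n)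
      = 2 * ((n : R[X]) + 1) * ((n : R[X]) - 1) * T R n
        + 2 * (n : R[X]) * ((n : R[X]) - 2) * T R (n - 1) := by
  have hU := one_add_X_mul_U_sub_U R (n - 1)
  rw [sub_add_cancel, sub_sub, one_add_one_eq_two] at hU
  simp only [piessensPoly, derivative_sub, derivative_mul, T_derivative_eq_U, derivative_ofNat,
    derivative_intCast, derivative_one]
  push_cast
  rw [sub_sub, one_add_one_eq_two]
  linear_combination 2 * (n : R[X]) * ((n : R[X]) - 1) * hU

theorem rpowExpDerivative_piessensPoly (a c : R) (n : ℤ) :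
    rpowExpDerivative a c (piessensPoly R n)
      = Polynomial.C (c * (n - 1)) * T R (n + 1)
        + Polynomial.C (2 * (n - a + 1) * (n - 1) + c * (n - 2)) * T R n
        + Polynomial.C (2 * n * (n + a - 2) - c * (n + 1)) * T R (n - 1)
        - Polynomial.C (c * n) * T R (n - 2) := by
  have h1 := one_add_X_mul_piessensPoly R n
  have h2 := piessensPoly_add_one_add_X_mul_derivative R n
  simp only [rpowExpDerivative, map_mul, map_sub, map_add, map_intCast, map_one, map_ofNat]
  unfold piessensPoly at h1 h2 ⊢
  linear_combination Polynomial.C c * h1 + h2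

end Polynomial.Chebyshev

noncomputable def weightedExpMoment (α : ℝ) (c : ℂ) (p : ℂ[X]) : ℂ :=
  ∫ y in (-1 : ℝ)..1, (((1 + y) ^ (-α) : ℝ) : ℂ) * p.eval (y : ℂ) * Complex.exp (c * y)

theorem intervalIntegrable_rpow_mul_eval_mul_exp {α : ℝ} (hα : α < 1) (c : ℂ) (p : ℂ[X]) :
    IntervalIntegrable (fun y : ℝ => (((1 + y) ^ (-α) : ℝ) : ℂ) * p.eval (y : ℂ)
      * Complex.exp (c * y)) volume (-1) 1 := by
  have hw : IntervalIntegrable (fun y : ℝ => (((1 + y) ^ (-α) : ℝ) : ℂ)) volume (-1) 1 := by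
    have h := (intervalIntegrable_rpow' (a := 0) (b := 2) (r := -α) (by linarith)).comp_add_left 1
    rw [zero_sub, show (2 : ℝ) - 1 = 1 by norm_num, intervalIntegrable_iff] at h
    exact intervalIntegrable_iff.mpr h.ofReal
  have hg : Continuous fun y : ℝ => p.eval (y : ℂ) * Complex.exp (c * y) := by fun_prop
  simpa only [mul_assoc] using hw.mul_continuousOn hg.continuousOn

theorem weightedExpMoment_add {α : ℝ} (hα : α < 1) (c : ℂ) (p q : ℂ[X]) :
    weightedExpMoment α c (p + q) = weightedExpMoment α c p + weightedExpMoment α c q := by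
  simp only [weightedExpMoment, eval_add, mul_add, add_mul]
  exact integral_add (intervalIntegrable_rpow_mul_eval_mul_exp hα c p)
    (intervalIntegrable_rpow_mul_eval_mul_exp hα c q)

theorem weightedExpMoment_sub {α : ℝ} (hα : α < 1) (c : ℂ) (p q : ℂ[X]) :
    weightedExpMoment α c (p - q) = weightedExpMoment α c p - weightedExpMoment α c q := by
  simp only [weightedExpMoment, eval_sub, mul_sub, sub_mul]
  exact integral_sub (intervalIntegrable_rpow_mul_eval_mul_exp hα c p)
    (intervalIntegrable_rpow_mul_eval_mul_exp hα c q)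

theorem weightedExpMoment_C_mul (α : ℝ) (c a : ℂ) (p : ℂ[X]) :
    weightedExpMoment α c (Polynomial.C a * p) = a * weightedExpMoment α c p := by
  rw [weightedExpMoment, weightedExpMoment, ← intervalIntegral.integral_const_mul]
  congr 1
  funext y
  simp only [eval_mul, eval_C]
  ring

theorem hasDerivAt_rpow_mul_eval_mul_exp (α : ℝ) (c : ℂ) (p : ℂ[X]) {x : ℝ} (hx : 0 < 1 + x) :
    HasDerivAt
      (fun y : ℝ => (((1 + y) ^ (1 - α) : ℝ) : ℂ) * p.eval (y : ℂ) * Complex.exp (c * y))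
      ((((1 + x) ^ (-α) : ℝ) : ℂ) * (rpowExpDerivative (α : ℂ) c p).eval (x : ℂ)
        * Complex.exp (c * x)) x := by
  have hw : HasDerivAt (fun y : ℝ => (1 + y) ^ (1 - α)) ((1 - α) * (1 + x) ^ (-α)) x := by
    simpa [sub_sub_cancel_left] using
      ((hasDerivAt_id x).const_add 1).rpow_const (p := 1 - α) (Or.inl hx.ne')
  have hp : HasDerivAt (fun y : ℝ => p.eval (y : ℂ)) ((derivative p).eval (x : ℂ)) x :=
    (p.hasDerivAt (x : ℂ)).comp_ofReal
  have he : HasDerivAt (fun y : ℝ => Complex.exp (c * y)) (c * Complex.exp (c * x)) x := by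
    simpa [mul_comm] using (((hasDerivAt_id (x : ℂ)).const_mul c).cexp).comp_ofReal
  have hsplit : (((1 + x) ^ (1 - α) : ℝ) : ℂ) = (1 + x) * (((1 + x) ^ (-α) : ℝ) : ℂ) := by
    rw [sub_eq_add_neg, Real.rpow_add hx, Real.rpow_one]; push_cast; ring
  refine ((hw.ofReal_comp.mul hp).mul he).congr_deriv ?_
  simp only [rpowExpDerivative, eval_add, eval_mul, eval_C, eval_one, eval_X, Pi.mul_apply, hsplit]
  push_cast
  ring

theorem weightedExpMoment_rpowExpDerivative {α : ℝ} (hα : α < 1) (c : ℂ) (p : ℂ[X]) :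
    weightedExpMoment α c (rpowExpDerivative (α : ℂ) c p)
      = ((2 ^ (1 - α) : ℝ) : ℂ) * p.eval 1 * Complex.exp c := by
  have hcont : Continuous fun y : ℝ => (((1 + y) ^ (1 - α) : ℝ) : ℂ) * p.eval (y : ℂ)
      * Complex.exp (c * y) := by
    have : Continuous fun y : ℝ => (1 + y) ^ (1 - α) :=
      (continuous_const.add continuous_id).rpow_const fun _ => Or.inr (by linarith)
    fun_prop
  rw [weightedExpMoment, integral_eq_sub_of_hasDerivAt_of_le (by norm_num) hcont.continuousOn
    (fun x hx => hasDerivAt_rpow_mul_eval_mul_exp α c p (by linarith [hx.1]))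
    (intervalIntegrable_rpow_mul_eval_mul_exp hα c _)]
  norm_num [Real.zero_rpow (by linarith : 1 - α ≠ 0)]

theorem chebyshev_moments_four_term_recurrence_general
    (α ω : ℝ) (hα1 : α < 1)
    (Z : ℕ → ℂ)
    (hZ : ∀ k : ℕ, Z k = ∫ y in (-1 : ℝ)..1,
      (((1 + y) ^ (-α) : ℝ) : ℂ) *
        (((Polynomial.Chebyshev.T ℝ (k : ℤ)).eval y : ℝ) : ℂ) *
        Complex.exp (Complex.I * ω * y))
    (n : ℕ) (hn : 2 ≤ n) :
    Complex.I * ω * ((n : ℂ) - 1) * Z (n + 1) +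
      (2 * ((n : ℂ) - α + 1) * ((n : ℂ) - 1) + Complex.I * ω * ((n : ℂ) - 2)) * Z n +
      (2 * (n : ℂ) * ((n : ℂ) + α - 2) - Complex.I * ω * ((n : ℂ) + 1)) * Z (n - 1) -
      Complex.I * ω * (n : ℂ) * Z (n - 2) =
    -(((2 : ℝ) ^ (2 - α) : ℝ) : ℂ) * Complex.exp (Complex.I * ω) := by
  open Polynomial.Chebyshev in
  have hZT : ∀ k : ℕ, Z k = weightedExpMoment α (Complex.I * ω) (T ℂ k) := fun k => by
    simp only [hZ, weightedExpMoment, ← Complex.coe_algebraMap, algebraMap_eval_T]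
  have key := weightedExpMoment_rpowExpDerivative hα1 (Complex.I * ω) (piessensPoly ℂ n)
  rw [rpowExpDerivative_piessensPoly, weightedExpMoment_sub hα1, weightedExpMoment_add hα1,
    weightedExpMoment_add hα1, weightedExpMoment_C_mul, weightedExpMoment_C_mul,
    weightedExpMoment_C_mul, weightedExpMoment_C_mul, piessensPoly_eval_one] at key
  have hsub1 : ((n - 1 : ℕ) : ℤ) = n - 1 := by omega
  have hsub2 : ((n - 2 : ℕ) : ℤ) = n - 2 := by omega
  have htwo : (2 : ℝ) ^ (2 - α) = 2 * 2 ^ (1 - α) := by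
    rw [show 2 - α = 1 + (1 - α) by ring, Real.rpow_add two_pos, Real.rpow_one]
  rw [hZT, hZT, hZT, hZT, hsub1, hsub2, htwo]
  push_cast at key ⊢
  linear_combination key

/-- Four-term recurrence (3.17) for the Chebyshev moments
Z_k = ∫_{−1}^1 (1+y)^{−α} T_k(y) e^{iω̃y} dy. -/
theorem chebyshev_moments_four_term_recurrence
    (α ω : ℝ) (hα0 : 0 ≤ α) (hα1 : α < 1) (hω : 0 < ω)
    (Z : ℕ → ℂ)
    (hZ : ∀ k : ℕ, Z k = ∫ y in (-1 : ℝ)..1,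
      (((1 + y) ^ (-α) : ℝ) : ℂ) *
        (((Polynomial.Chebyshev.T ℝ (k : ℤ)).eval y : ℝ) : ℂ) *
        Complex.exp (Complex.I * ω * y))
    (n : ℕ) (hn : 2 ≤ n) :
    Complex.I * ω * ((n : ℂ) - 1) * Z (n + 1) +
      (2 * ((n : ℂ) - α + 1) * ((n : ℂ) - 1) + Complex.I * ω * ((n : ℂ) - 2)) * Z n +
      (2 * (n : ℂ) * ((n : ℂ) + α - 2) - Complex.I * ω * ((n : ℂ) + 1)) * Z (n - 1) -
      Complex.I * ω * (n : ℂ) * Z (n - 2) =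
    -(((2 : ℝ) ^ (2 - α) : ℝ) : ℂ) * Complex.exp (Complex.I * ω) :=
  chebyshev_moments_four_term_recurrence_general α ω hα1 Z hZ n hn
end

section
/- Let 0 ≤ α < 1 and ω̃ > 0, and for k ≥ 0 let Z_k = ∫_{−1}^{1} (1+y)^{−α}·T_k(y)·e^{iω̃y} dy, where T_k is the Chebyshev polynomial of the first kind. Then Z_0 = (e^{−iω̃}/ω̃^{1−α})·e^{iπ(1−α)/2}·γ(1−α, −2iω̃), Z_1 = (e^{−iω̃}/ω̃^{2−α})·e^{iπ(2−α)/2}·γ(2−α, −2iω̃) − Z_0, and Z_2 = (2e^{−iω̃}/ω̃^{3−α})·e^{iπ(3−α)/2}·γ(3−α, −2iω̃) − 4Z_1 − 3Z_0, where for Re a > 0 the lower incomplete Gamma function along the straight segment from 0 to z ∈ ℂ is γ(a, z) = ∫_0^1 z·(zs)^{a−1}·e^{−zs} ds (principal branch powers). -/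
/-!
With `γ(a, z)` realised as `segmentGamma a z`, the substitution `s = (1 + y) / 2` gives
`γ(r + 1, -2iω) = (-iω)^(r+1) e^{iω} ∫_{-1}^{1} (1 + y)^r e^{iωy} dy`, and on the principal
branch `(-iω)^(r+1) = e^{-iπ(r+1)/2} ω^(r+1)`. Writing `T₀ = 1`, `T₁ = (1 + y) - 1` and
`T₂ = 2(1 + y)² - 4(1 + y) + 1` in powers of `1 + y` expresses `Z₀, Z₁, Z₂` through these
moments with `r = -α, 1 - α, 2 - α`.
-/

open Filter MeasureTheory Set intervalIntegral

open Complex in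
theorem Complex.mul_ofReal_cpow_of_pos {x : ℂ} (hx : x ≠ 0) {r : ℝ} (hr : 0 < r) (c : ℂ) :
    (x * r) ^ c = x ^ c * (r : ℂ) ^ c := by
  have hr' : (r : ℂ) ≠ 0 := ofReal_ne_zero.mpr hr.ne'
  rw [cpow_def_of_ne_zero (mul_ne_zero hx hr'), cpow_def_of_ne_zero hx, cpow_def_of_ne_zero hr',
    log_mul_ofReal r hr x hx, add_mul, exp_add, ← ofReal_log hr.le, mul_comm]

open Complex in
theorem Complex.neg_I_mul_ofReal_cpow {ω : ℝ} (hω : 0 < ω) (a : ℝ) :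
    (-(I * ω)) ^ (a : ℂ) = exp (-(Real.pi * I * a / 2)) * ((ω ^ a : ℝ) : ℂ) := by
  rw [← neg_mul, mul_ofReal_cpow_of_pos (neg_ne_zero.mpr I_ne_zero) hω,
    cpow_def_of_ne_zero (neg_ne_zero.mpr I_ne_zero), log_neg_I, ofReal_cpow hω.le]
  ring_nf

noncomputable def segmentGamma (a z : ℂ) : ℂ :=
  ∫ s in (0 : ℝ)..1, z * (z * s) ^ (a - 1) * Complex.exp (-(z * s))

noncomputable def powerMoment (w : ℂ) (r : ℝ) : ℂ :=
  ∫ y in (-1 : ℝ)..1, (((1 + y) ^ r : ℝ) : ℂ) * Complex.exp (w * y)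

theorem intervalIntegrable_one_add_rpow_mul {r : ℝ} (hr : -1 < r) {g : ℝ → ℂ}
    (hg : Continuous g) :
    IntervalIntegrable (fun y => (((1 + y) ^ r : ℝ) : ℂ) * g y) volume (-1) 1 := by
  have h := (intervalIntegral.intervalIntegrable_rpow' (a := 0) (b := 2) hr).comp_add_left 1
  norm_num at h
  rw [intervalIntegrable_iff] at h
  exact (intervalIntegrable_iff.mpr (by exact h.ofReal)).mul_continuousOn hg.continuousOn

open Complex in
theorem segmentGamma_neg_two_mul {w : ℂ} (hw : w ≠ 0) (r : ℝ) :
    segmentGamma (r + 1) (-(2 * w)) = (-w) ^ ((r : ℂ) + 1) * exp w * powerMoment w r := by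
  set f : ℝ → ℂ := fun y => -(2 * w) * (-(2 * w) * (((1 + y) / 2 : ℝ) : ℂ)) ^ (r : ℂ) *
    exp (-(-(2 * w) * (((1 + y) / 2 : ℝ) : ℂ)))
  have hsub : segmentGamma (r + 1) (-(2 * w)) = (2⁻¹ : ℝ) • ∫ y in (-1 : ℝ)..1, f y := by
    have h : ∫ s in (0 : ℝ)..1, f (2 * s + -1) = (2⁻¹ : ℝ) • ∫ y in (-1 : ℝ)..1, f y := by
      rw [integral_comp_mul_add f two_ne_zero]
      norm_num
    rw [← h, segmentGamma]
    refine integral_congr fun s _ => ?_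
    simp only [f, add_sub_cancel_right, show (1 + (2 * s + -1)) / 2 = s by ring]
  rw [hsub, powerMoment, ← intervalIntegral.integral_const_mul,
    ← intervalIntegral.integral_smul]
  refine integral_congr_ae (Eventually.of_forall fun y hy => ?_)
  have hy : 0 < 1 + y := by
    rw [uIoc_of_le (by norm_num)] at hy
    linarith [hy.1]
  have hlin : -(2 * w) * (((1 + y) / 2 : ℝ) : ℂ) = -w * ((1 + y : ℝ) : ℂ) := by
    push_cast; ring
  simp only [f]
  rw [hlin, mul_ofReal_cpow_of_pos (neg_ne_zero.mpr hw) hy, ← ofReal_cpow hy.le,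
    cpow_add _ _ (neg_ne_zero.mpr hw), cpow_one,
    show -(-w * ((1 + y : ℝ) : ℂ)) = w + w * y by push_cast; ring, exp_add, real_smul]
  push_cast
  ring

open Complex in
theorem powerMoment_I_mul_eq_segmentGamma {ω : ℝ} (hω : 0 < ω) (a : ℝ) :
    powerMoment (I * ω) (a - 1) = exp (-(I * ω)) / ((ω ^ a : ℝ) : ℂ) *
      exp (Real.pi * I * a / 2) * segmentGamma a (-(2 * I * ω)) := by
  have hIω : I * ω ≠ 0 := mul_ne_zero I_ne_zero (ofReal_ne_zero.mpr hω.ne')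
  have hW : ((ω ^ a : ℝ) : ℂ) ≠ 0 := ofReal_ne_zero.mpr (Real.rpow_pos_of_pos hω a).ne'
  have h := segmentGamma_neg_two_mul hIω (a - 1)
  rw [show ((a - 1 : ℝ) : ℂ) + 1 = a by push_cast; ring, neg_I_mul_ofReal_cpow hω, ← mul_assoc]
    at h
  have h₁ : exp (-(I * ω)) * exp (I * ω) = 1 := by rw [← exp_add]; simp
  have h₂ : exp (Real.pi * I * a / 2) * exp (-(Real.pi * I * a / 2)) = 1 := by
    rw [← exp_add]; simp
  have h₃ : ((ω ^ a : ℝ) : ℂ) * ((ω ^ a : ℝ) : ℂ)⁻¹ = 1 := mul_inv_cancel₀ hW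
  rw [h]
  calc powerMoment (I * ω) (a - 1)
      = (exp (-(I * ω)) * exp (I * ω)) * (exp (Real.pi * I * a / 2) *
          exp (-(Real.pi * I * a / 2))) * (((ω ^ a : ℝ) : ℂ) * ((ω ^ a : ℝ) : ℂ)⁻¹) *
          powerMoment (I * ω) (a - 1) := by rw [h₁, h₂, h₃]; ring
    _ = _ := by ring

theorem integral_rpow_mul_eq_sum_powerMoment {r : ℝ} (hr : -1 < r) (w : ℂ) {N : ℕ}
    (p : ℝ → ℝ) (c : Fin N → ℝ) (hp : ∀ y, p y = ∑ n, c n * (1 + y) ^ (n : ℕ)) :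
    ∫ y in (-1 : ℝ)..1, (((1 + y) ^ r : ℝ) : ℂ) * (p y : ℂ) * Complex.exp (w * y) =
      ∑ n, (c n : ℂ) * powerMoment w (r + n) := by
  simp_rw [powerMoment, ← intervalIntegral.integral_const_mul]
  rw [← integral_finsetSum fun n _ => (intervalIntegrable_one_add_rpow_mul
    (by linarith [(Nat.cast_nonneg n : (0 : ℝ) ≤ n)]) (by fun_prop)).const_mul _]
  refine integral_congr_ae (Eventually.of_forall fun y hy => ?_)
  have hy : 1 + y ≠ 0 := by
    rw [uIoc_of_le (by norm_num)] at hy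
    linarith [hy.1]
  rw [hp, Complex.ofReal_sum, Finset.mul_sum, Finset.sum_mul]
  refine Finset.sum_congr rfl fun n _ => ?_
  rw [Real.rpow_add_natCast hy]
  push_cast
  ring

theorem chebyshev_moments_initial_values_general
    (α ω : ℝ) (hα1 : α < 1) (hω : 0 < ω)
    (Z : ℕ → ℂ) (G : ℂ → ℂ)
    (hZ : ∀ k : ℕ, Z k = ∫ y in (-1 : ℝ)..1,
      (((1 + y) ^ (-α) : ℝ) : ℂ) *
        (((Polynomial.Chebyshev.T ℝ (k : ℤ)).eval y : ℝ) : ℂ) *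
        Complex.exp (Complex.I * ω * y))
    (hG : ∀ a : ℂ, 0 < a.re → G a = ∫ s in (0 : ℝ)..1,
      (-(2 * Complex.I * ω)) * ((-(2 * Complex.I * ω)) * s) ^ (a - 1) *
        Complex.exp (-((-(2 * Complex.I * ω)) * s))) :
    Z 0 = Complex.exp (-(Complex.I * ω)) / ((ω ^ (1 - α) : ℝ) : ℂ) *
        Complex.exp (Real.pi * Complex.I * (1 - α) / 2) * G (1 - α) ∧
    Z 1 = Complex.exp (-(Complex.I * ω)) / ((ω ^ (2 - α) : ℝ) : ℂ) *
        Complex.exp (Real.pi * Complex.I * (2 - α) / 2) * G (2 - α) - Z 0 ∧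
    Z 2 = 2 * Complex.exp (-(Complex.I * ω)) / ((ω ^ (3 - α) : ℝ) : ℂ) *
        Complex.exp (Real.pi * Complex.I * (3 - α) / 2) * G (3 - α) -
        4 * Z 1 - 3 * Z 0 := by
  have hM (a : ℝ) (ha : 0 < a) : powerMoment (Complex.I * ω) (a - 1) =
      Complex.exp (-(Complex.I * ω)) / ((ω ^ a : ℝ) : ℂ) *
        Complex.exp (Real.pi * Complex.I * a / 2) * G a := by
    rw [powerMoment_I_mul_eq_segmentGamma hω, segmentGamma, hG a (by simpa)]
  have hZ' (k : ℕ) {N : ℕ} (c : Fin N → ℝ)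
      (hT : ∀ y, (Polynomial.Chebyshev.T ℝ k).eval y = ∑ n, c n * (1 + y) ^ (n : ℕ)) :
      Z k = ∑ n, (c n : ℂ) * powerMoment (Complex.I * ω) (-α + n) :=
    (hZ k).trans (integral_rpow_mul_eq_sum_powerMoment (by linarith) _ _ c hT)
  set P := powerMoment (Complex.I * ω)
  have h0 : Z 0 = P (-α) := by simpa using hZ' 0 ![1] (by simp)
  have h1 : Z 1 = P (-α + 1) - P (-α) := by
    simpa [Fin.sum_univ_two, sub_eq_neg_add] using hZ' 1 ![-1, 1] (by simp)
  have h2 : Z 2 = 2 * P (-α + 2) - 4 * P (-α + 1) + P (-α) := by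
    refine (hZ' 2 ![1, -4, 2] fun y => ?_).trans ?_
    · simp [Fin.sum_univ_three, Polynomial.Chebyshev.T_two]; ring
    · simp [Fin.sum_univ_three]; ring
  have m0 := hM (1 - α) (by linarith)
  have m1 := hM (2 - α) (by linarith)
  have m2 := hM (3 - α) (by linarith)
  rw [show 1 - α - 1 = -α by ring] at m0
  rw [show 2 - α - 1 = -α + 1 by ring] at m1
  rw [show 3 - α - 1 = -α + 2 by ring] at m2
  push_cast at m0 m1 m2
  exact ⟨by linear_combination h0 + m0, by linear_combination h1 + m1 + h0,
    by linear_combination h2 + 2 * m2 + 4 * h1 + 3 * h0⟩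

/-- Initial values of the Chebyshev moments Z₀, Z₁, Z₂ in terms of the lower
incomplete Gamma function γ(a, −2iω̃) taken along the straight segment from 0. -/
theorem chebyshev_moments_initial_values
    (α ω : ℝ) (hα0 : 0 ≤ α) (hα1 : α < 1) (hω : 0 < ω)
    (Z : ℕ → ℂ) (G : ℂ → ℂ)
    (hZ : ∀ k : ℕ, Z k = ∫ y in (-1 : ℝ)..1,
      (((1 + y) ^ (-α) : ℝ) : ℂ) *
        (((Polynomial.Chebyshev.T ℝ (k : ℤ)).eval y : ℝ) : ℂ) *
        Complex.exp (Complex.I * ω * y))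
    (hG : ∀ a : ℂ, 0 < a.re → G a = ∫ s in (0 : ℝ)..1,
      (-(2 * Complex.I * ω)) * ((-(2 * Complex.I * ω)) * s) ^ (a - 1) *
        Complex.exp (-((-(2 * Complex.I * ω)) * s))) :
    Z 0 = Complex.exp (-(Complex.I * ω)) / ((ω ^ (1 - α) : ℝ) : ℂ) *
        Complex.exp (Real.pi * Complex.I * (1 - α) / 2) * G (1 - α) ∧
    Z 1 = Complex.exp (-(Complex.I * ω)) / ((ω ^ (2 - α) : ℝ) : ℂ) *
        Complex.exp (Real.pi * Complex.I * (2 - α) / 2) * G (2 - α) - Z 0 ∧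
    Z 2 = 2 * Complex.exp (-(Complex.I * ω)) / ((ω ^ (3 - α) : ℝ) : ℂ) *
        Complex.exp (Real.pi * Complex.I * (3 - α) / 2) * G (3 - α) -
        4 * Z 1 - 3 * Z 0 :=
  chebyshev_moments_initial_values_general α ω hα1 hω Z G hZ hG
end

section
/- Let ω̃ > 0 and for each integer l ≥ 0 let M_l = ∫_{−1}^{1} U_l(y)·e^{iω̃y} dy, where U_l is the degree-l Chebyshev polynomial of the second kind. Then M_0 = 2·sin(ω̃)/ω̃, M_1 = 4i·( sin(ω̃)/ω̃² − cos(ω̃)/ω̃ ), and for every integer l ≥ 2: M_l + (2l/(iω̃))·M_{l−1} − M_{l−2} = (2/(iω̃))·( e^{iω̃} − (−1)^l·e^{−iω̃} ). -/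
/-!
All three identities come from one integration by parts on `[-1, 1]`,
`∫ p' e^{cy} = p(1) e^c - p(-1) e^{-c} - c ∫ p e^{cy}`.
With `p = X` it gives the first moment from the zeroth one. With `p = T_l` it gives the
recurrence, because `T_l' = l U_{l-1}`, `2 T_l = U_l - U_{l-2}` and `T_l(±1) = (±1)^l`.
-/

open Filter MeasureTheory Set intervalIntegral

open Polynomial

noncomputable def expMoment (c : ℂ) (p : ℝ[X]) : ℂ :=
  ∫ y in (-1 : ℝ)..1, ((p.eval y : ℝ) : ℂ) * Complex.exp (c * y)

lemma intervalIntegrable_eval_mul_cexp (c : ℂ) (p : ℝ[X]) (a b : ℝ) :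
    IntervalIntegrable (fun y : ℝ => ((p.eval y : ℝ) : ℂ) * Complex.exp (c * y)) volume a b := by
  apply Continuous.intervalIntegrable
  fun_prop

lemma expMoment_sub (c : ℂ) (p q : ℝ[X]) :
    expMoment c (p - q) = expMoment c p - expMoment c q := by
  simp only [expMoment, eval_sub, Complex.ofReal_sub, sub_mul]
  exact integral_sub (intervalIntegrable_eval_mul_cexp c p _ _)
    (intervalIntegrable_eval_mul_cexp c q _ _)

lemma expMoment_C_mul (c : ℂ) (a : ℝ) (p : ℝ[X]) :
    expMoment c (C a * p) = a * expMoment c p := by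
  simp only [expMoment, eval_mul, eval_C, Complex.ofReal_mul, mul_assoc]
  exact integral_const_mul _ _

lemma expMoment_one {c : ℂ} (hc : c ≠ 0) :
    expMoment c 1 = (Complex.exp c - Complex.exp (-c)) / c := by
  simp [expMoment, integral_exp_mul_complex hc]

lemma expMoment_derivative (c : ℂ) (p : ℝ[X]) :
    expMoment c (derivative p) =
      ((p.eval 1 : ℝ) : ℂ) * Complex.exp c - ((p.eval (-1) : ℝ) : ℂ) * Complex.exp (-c) -
        c * expMoment c p := by
  have hp (x : ℝ) :
      HasDerivAt (fun y : ℝ => ((p.eval y : ℝ) : ℂ)) (((derivative p).eval x : ℝ) : ℂ) x :=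
    (p.hasDerivAt x).ofReal_comp
  have he (x : ℝ) :
      HasDerivAt (fun y : ℝ => Complex.exp (c * y)) (Complex.exp (c * x) * c) x := by
    simpa using (((hasDerivAt_id (x : ℂ)).const_mul c).comp_ofReal).cexp
  have hibp := integral_deriv_mul_eq_sub (a := -1) (b := 1) (fun x _ => hp x) (fun x _ => he x)
    (Continuous.intervalIntegrable (by fun_prop) _ _)
    (Continuous.intervalIntegrable (by fun_prop) _ _)
  rw [integral_add (intervalIntegrable_eval_mul_cexp c _ _ _)
    (Continuous.intervalIntegrable (by fun_prop) _ _)] at hibp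
  simp only [← mul_assoc, intervalIntegral.integral_mul_const, Complex.ofReal_one,
    Complex.ofReal_neg, mul_one, mul_neg] at hibp
  rw [expMoment, expMoment]
  linear_combination hibp

lemma expMoment_X {c : ℂ} (hc : c ≠ 0) :
    expMoment c X =
      (Complex.exp c + Complex.exp (-c) - (Complex.exp c - Complex.exp (-c)) / c) / c := by
  have h := expMoment_derivative c X
  rw [derivative_X, expMoment_one hc] at h
  simp only [eval_X, Complex.ofReal_one, Complex.ofReal_neg, one_mul, neg_one_mul] at h
  rw [eq_div_iff hc]
  linear_combination h

lemma expMoment_chebyshevU_recurrence {c : ℂ} (hc : c ≠ 0) (n : ℤ) :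
    expMoment c (Chebyshev.U ℝ n) + 2 * n / c * expMoment c (Chebyshev.U ℝ (n - 1)) -
        expMoment c (Chebyshev.U ℝ (n - 2)) =
      2 / c * (Complex.exp c - n.negOnePow * Complex.exp (-c)) := by
  have hibp := expMoment_derivative c (Chebyshev.T ℝ n)
  rw [Chebyshev.T_derivative_eq_U, ← map_intCast (C : ℝ →+* ℝ[X]), expMoment_C_mul,
    Chebyshev.T_eval_one, Chebyshev.T_eval_neg_one] at hibp
  have hT : C 2 * Chebyshev.T ℝ n = Chebyshev.U ℝ n - Chebyshev.U ℝ (n - 2) := by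
    simpa [C_ofNat] using Chebyshev.two_mul_T_eq_U_sub_U ℝ (n - 2)
  have hTmoment := congrArg (expMoment c) hT
  rw [expMoment_C_mul, expMoment_sub] at hTmoment
  push_cast at hibp hTmoment
  field_simp
  linear_combination 2 * hibp - c * hTmoment

lemma cexp_I_mul_sub_cexp_neg (x : ℝ) :
    Complex.exp (Complex.I * x) - Complex.exp (-(Complex.I * x)) = 2 * Complex.I * Real.sin x := by
  rw [mul_comm Complex.I, ← neg_mul, Complex.exp_mul_I, Complex.exp_mul_I, Complex.cos_neg,
    Complex.sin_neg, Complex.ofReal_sin]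
  ring

lemma cexp_I_mul_add_cexp_neg (x : ℝ) :
    Complex.exp (Complex.I * x) + Complex.exp (-(Complex.I * x)) = 2 * Real.cos x := by
  rw [mul_comm Complex.I, ← neg_mul, Complex.exp_mul_I, Complex.exp_mul_I, Complex.cos_neg,
    Complex.sin_neg, Complex.ofReal_cos]
  ring

/-- Three-term recurrence (3.25) with initial values for the moments
M_l = ∫_{−1}^1 U_l(y) e^{iω̃y} dy of Chebyshev polynomials of the second kind. -/
theorem chebyshev_U_moments_recurrence
    (ω : ℝ) (hω : 0 < ω)
    (M : ℕ → ℂ)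
    (hM : ∀ l : ℕ, M l = ∫ y in (-1 : ℝ)..1,
      (((Polynomial.Chebyshev.U ℝ (l : ℤ)).eval y : ℝ) : ℂ) *
        Complex.exp (Complex.I * ω * y)) :
    M 0 = 2 * Real.sin ω / ω ∧
    M 1 = 4 * Complex.I * (((Real.sin ω / ω ^ 2 : ℝ) : ℂ) - ((Real.cos ω / ω : ℝ) : ℂ)) ∧
    ∀ l : ℕ, 2 ≤ l →
      M l + 2 * (l : ℂ) / (Complex.I * ω) * M (l - 1) - M (l - 2) =
        2 / (Complex.I * ω) *
          (Complex.exp (Complex.I * ω) - (-1 : ℂ) ^ l * Complex.exp (-(Complex.I * ω))) := by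
  have hω₀ : (ω : ℂ) ≠ 0 := Complex.ofReal_ne_zero.mpr hω.ne'
  have hc : Complex.I * ω ≠ 0 := mul_ne_zero Complex.I_ne_zero hω₀
  have hM' : ∀ l : ℕ, M l = expMoment (Complex.I * ω) (Chebyshev.U ℝ l) := hM
  refine ⟨?_, ?_, fun l hl => ?_⟩
  · rw [hM', Nat.cast_zero, Chebyshev.U_zero, expMoment_one hc, cexp_I_mul_sub_cexp_neg]
    field_simp
  · rw [hM', Nat.cast_one, Chebyshev.U_one, ← C_ofNat, expMoment_C_mul, expMoment_X hc,
      cexp_I_mul_sub_cexp_neg, cexp_I_mul_add_cexp_neg]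
    simp only [Complex.ofReal_div, Complex.ofReal_pow, Complex.ofReal_ofNat]
    field_simp
    linear_combination (4 * ω * Real.cos ω - 4 * Real.sin ω) * Complex.I_sq
  · have hrec := expMoment_chebyshevU_recurrence hc l
    rw [Int.cast_negOnePow_natCast, Int.cast_natCast] at hrec
    have hl₁ : ((l - 1 : ℕ) : ℤ) = l - 1 := by omega
    have hl₂ : ((l - 2 : ℕ) : ℤ) = l - 2 := by omega
    rwa [hM', hM', hM', hl₁, hl₂]
end

section
/- Let N ≥ 1 be an integer, let a_0, a_1, …, a_N be complex numbers, let τ ∈ ℂ, and let p(y) = (a_0/2)·T_0(y) + Σ_{k=1}^{N−1} a_k·T_k(y) + (a_N/2)·T_N(y). Define b_N = 0, b_{N−1} = a_N, and b_{k−1} = 2a_k + 2τ·b_k − b_{k+1} for k = N−1, N−2, …, 1. Then, as an identity of polynomials in y, p(y) − p(τ) = (y − τ)·( (b_0/2)·T_0(y) + Σ_{k=1}^{N−1} b_k·T_k(y) ). -/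
/-!
Let `q` be the candidate quotient. Since `2 X T_k = T_(k+1) + T_(k-1)`, the recurrence for `b`
makes `2 (X - τ) q` telescope to `2 p` minus a constant, and evaluating at `τ` shows that this
constant is `2 p(τ)`.
-/

open Polynomial Finset

section CommRing

variable {R : Type*} [CommRing R]

theorem sub_C_eval_eq_of_sub_C_eq_X_sub_C_mul {p q : R[X]} {τ c : R}
    (h : p - C c = (X - C τ) * q) : p - C (p.eval τ) = (X - C τ) * q := by
  have hc : p.eval τ = c := by
    simpa [sub_eq_zero] using congrArg (eval τ) h
  rwa [hc]

theorem two_mul_X_sub_C_mul_C_mul_T_add_one (τ a b₀ b₁ b₂ : R) (k : ℤ)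
    (h : b₀ = 2 * a + 2 * τ * b₁ - b₂) :
    2 * (X - C τ) * (C b₁ * Chebyshev.T R (k + 1)) =
      2 * C a * Chebyshev.T R (k + 1)
        + (C b₁ * Chebyshev.T R (k + 1 + 1) - C b₂ * Chebyshev.T R (k + 1))
        - (C b₀ * Chebyshev.T R (k + 1) - C b₁ * Chebyshev.T R k) := by
  rw [h, add_assoc, one_add_one_eq_two, Chebyshev.T_add_two]
  simp only [map_sub, map_add, map_mul, map_ofNat]
  ring

theorem two_mul_X_sub_C_mul_sum_Icc_C_mul_T (τ : R) (a b : ℕ → R) (m : ℕ)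
    (hb : ∀ k, 1 ≤ k → k ≤ m → b (k - 1) = 2 * a k + 2 * τ * b k - b (k + 1)) :
    2 * (X - C τ) * ∑ k ∈ Icc 1 m, C (b k) * Chebyshev.T R k =
      2 * ∑ k ∈ Icc 1 m, C (a k) * Chebyshev.T R k
        + (C (b m) * Chebyshev.T R (m + 1) - C (b (m + 1)) * Chebyshev.T R m)
        - (C (b 0) * X - C (b 1)) := by
  induction m with
  | zero => simp [Chebyshev.T_one]
  | succ m ih =>
    have step := two_mul_X_sub_C_mul_C_mul_T_add_one τ (a (m + 1)) (b m) (b (m + 1))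
      (b (m + 2)) m (hb (m + 1) (by omega) le_rfl)
    rw [sum_Icc_succ_top (by omega), sum_Icc_succ_top (by omega), mul_add,
      ih fun k hk hkm => hb k hk (by omega)]
    push_cast at step ⊢
    linear_combination step

end CommRing

theorem two_mul_C_half {K : Type*} [Field K] [NeZero (2 : K)] (x : K) :
    2 * C (x / 2) = C x := by
  rw [← map_ofNat C 2, ← C_mul, mul_div_cancel₀ x two_ne_zero]

theorem chebyshev_divided_difference_recurrence_general
    (N : ℕ) (a : ℕ → ℂ) (τ : ℂ) (b : ℕ → ℂ) (p : Polynomial ℂ)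
    (hp : p = Polynomial.C (a 0 / 2) * Polynomial.Chebyshev.T ℂ 0 +
      (∑ k ∈ Finset.Icc 1 (N - 1), Polynomial.C (a k) * Polynomial.Chebyshev.T ℂ (k : ℤ)) +
      Polynomial.C (a N / 2) * Polynomial.Chebyshev.T ℂ (N : ℤ))
    (hbN : b N = 0) (hbN1 : b (N - 1) = a N)
    (hb : ∀ k : ℕ, 1 ≤ k → k ≤ N - 1 →
      b (k - 1) = 2 * a k + 2 * τ * b k - b (k + 1)) :
    p - Polynomial.C (p.eval τ) =
      (Polynomial.X - Polynomial.C τ) *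
        (Polynomial.C (b 0 / 2) * Polynomial.Chebyshev.T ℂ 0 +
          ∑ k ∈ Finset.Icc 1 (N - 1), Polynomial.C (b k) * Polynomial.Chebyshev.T ℂ (k : ℤ)) := by
  obtain _ | M := N
  · simp [hp, hbN, ← C_add]
  simp only [Nat.add_sub_cancel] at hp hbN1 hb ⊢
  apply sub_C_eval_eq_of_sub_C_eq_X_sub_C_mul (c := (a 0 + τ * b 0 - b 1) / 2)
  have htelescope := two_mul_X_sub_C_mul_sum_Icc_C_mul_T τ a b M hb
  rw [hbN1, hbN, map_zero, zero_mul, sub_zero] at htelescope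
  have hconst : C (a 0 + τ * b 0 - b 1) = C (a 0) + C τ * C (b 0) - C (b 1) := by
    simp only [map_add, map_sub, map_mul]
  apply mul_left_cancel₀ (two_ne_zero (α := ℂ[X]))
  rw [hp, Chebyshev.T_zero]
  push_cast
  linear_combination -htelescope + two_mul_C_half (a 0)
    + Chebyshev.T ℂ (M + 1) * two_mul_C_half (a (M + 1))
    - two_mul_C_half (a 0 + τ * b 0 - b 1) - (X - C τ) * two_mul_C_half (b 0) - hconst

/-- The Hasegawa–Torii coefficient identity (3.14)–(3.15): the Chebyshev coefficients
of the divided difference (p(y) − p(τ))/(y − τ) are computed by a backward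
three-term recurrence. -/
theorem chebyshev_divided_difference_recurrence
    (N : ℕ) (hN : 1 ≤ N) (a : ℕ → ℂ) (τ : ℂ) (b : ℕ → ℂ) (p : Polynomial ℂ)
    (hp : p = Polynomial.C (a 0 / 2) * Polynomial.Chebyshev.T ℂ 0 +
      (∑ k ∈ Finset.Icc 1 (N - 1), Polynomial.C (a k) * Polynomial.Chebyshev.T ℂ (k : ℤ)) +
      Polynomial.C (a N / 2) * Polynomial.Chebyshev.T ℂ (N : ℤ))
    (hbN : b N = 0) (hbN1 : b (N - 1) = a N)
    (hb : ∀ k : ℕ, 1 ≤ k → k ≤ N - 1 →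
      b (k - 1) = 2 * a k + 2 * τ * b k - b (k + 1)) :
    p - Polynomial.C (p.eval τ) =
      (Polynomial.X - Polynomial.C τ) *
        (Polynomial.C (b 0 / 2) * Polynomial.Chebyshev.T ℂ 0 +
          ∑ k ∈ Finset.Icc 1 (N - 1), Polynomial.C (b k) * Polynomial.Chebyshev.T ℂ (k : ℤ)) :=
  chebyshev_divided_difference_recurrence_general N a τ b p hp hbN hbN1 hb
end
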